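/- arXiv:2410.07181 — 10 statements merged into one kernel-verified Lean document; each statement's English description precedes it below -/
import Mathlib

section
/- Let α, β, t be real numbers with t > 0, β > -1 and α + β + 1 < 0 (equivalently α < -β - 1 < 0). Then ∫_{τ ∈ (-∞, 0]} (t - τ)^α · |τ|^β dτ = t^(α+β+1) · Γ(-1-α-β) · Γ(β+1) / Γ(-α). -/
open MeasureTheory Set Real

lemma real_beta (a b : ℝ) (ha : 0 < a) (hb : 0 < b) :
    (∫ x in (0:ℝ)..1, x ^ (a - 1) * (1 - x) ^ (b - 1)) =
      Real.Gamma a * Real.Gamma b / Real.Gamma (a + b) := by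
  have h := Complex.Gamma_mul_Gamma_eq_betaIntegral (s := (a:ℂ)) (t := (b:ℂ))
    (by simpa using ha) (by simpa using hb)
  have hbeta : Complex.betaIntegral (a:ℂ) (b:ℂ) =
      ((∫ x in (0:ℝ)..1, x ^ (a - 1) * (1 - x) ^ (b - 1) : ℝ) : ℂ) := by
    rw [Complex.betaIntegral, ← intervalIntegral.integral_ofReal]
    apply intervalIntegral.integral_congr
    intro x hx
    rw [Set.uIcc_of_le (zero_le_one)] at hx
    have hx0 : (0:ℝ) ≤ x := hx.1
    have hx1 : (0:ℝ) ≤ 1 - x := by linarith [hx.2]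
    push_cast
    rw [Complex.ofReal_cpow hx0, Complex.ofReal_cpow hx1]
    push_cast
    ring
  rw [hbeta, ← Complex.ofReal_add, Complex.Gamma_ofReal, Complex.Gamma_ofReal,
    Complex.Gamma_ofReal, ← Complex.ofReal_mul, ← Complex.ofReal_mul] at h
  have h' := Complex.ofReal_injective h
  have hG : Real.Gamma (a + b) ≠ 0 := (Real.Gamma_pos_of_pos (by linarith)).ne'
  field_simp
  linarith [h']

lemma beta_Ioi (α β : ℝ) (hβ : -1 < β) (hαβ : α + β + 1 < 0) :
    (∫ x in Ioi (0:ℝ), x ^ β * (1 + x) ^ α) =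
      Real.Gamma (β + 1) * Real.Gamma (-α - β - 1) / Real.Gamma (-α) := by
  set f : ℝ → ℝ := fun u => u / (1 - u) with hf
  set f' : ℝ → ℝ := fun u => (1 - u) ^ (-2 : ℝ) with hf'
  have hderiv : ∀ u ∈ Ioo (0:ℝ) 1, HasDerivWithinAt f (f' u) (Ioo 0 1) u := by
    intro u hu
    have h1u : (0:ℝ) < 1 - u := by linarith [hu.2]
    have : HasDerivAt f ((1 * (1 - u) - u * (0 - 1)) / (1 - u) ^ 2) u := by
      exact (hasDerivAt_id u).div ((hasDerivAt_const u 1).sub (hasDerivAt_id u)) h1u.ne'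
    have hval : (1 * (1 - u) - u * (0 - 1)) / (1 - u) ^ 2 = f' u := by
      have h2 : (1 - u) ^ (-2 : ℝ) = ((1 - u) ^ (2:ℕ))⁻¹ := by
        rw [← Real.rpow_natCast (1 - u) 2, ← Real.rpow_neg h1u.le]
        norm_num
      rw [hf']
      simp only [h2]
      field_simp
      ring
    exact (hval ▸ this).hasDerivWithinAt
  have hinj : InjOn f (Ioo 0 1) := by
    intro u hu v hv h
    have h1u : (0:ℝ) < 1 - u := by linarith [hu.2]
    have h1v : (0:ℝ) < 1 - v := by linarith [hv.2]
    rw [hf] at h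
    field_simp at h
    linarith
  have himg : f '' Ioo 0 1 = Ioi (0:ℝ) := by
    ext x
    constructor
    · rintro ⟨u, hu, rfl⟩
      exact div_pos hu.1 (by linarith [hu.2])
    · intro hx
      have hx0 : (0:ℝ) < x := hx
      refine ⟨x / (1 + x), ⟨div_pos hx0 (by linarith), ?_⟩, ?_⟩
      · rw [div_lt_one (by linarith)]; linarith
      · rw [hf]
        have h1x : (0:ℝ) < 1 + x := by linarith
        field_simp
        ring
  have key := integral_image_eq_integral_abs_deriv_smul measurableSet_Ioo hderiv hinj
    (fun x => x ^ β * (1 + x) ^ α)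
  rw [himg] at key
  rw [key]
  have hcongr : ∀ u ∈ Ioo (0:ℝ) 1,
      |f' u| • (f u ^ β * (1 + f u) ^ α) = u ^ ((β+1) - 1) * (1 - u) ^ ((-α - β - 1) - 1) := by
    intro u hu
    have h0u : (0:ℝ) < u := hu.1
    have h1u : (0:ℝ) < 1 - u := by linarith [hu.2]
    have hfu : 1 + f u = (1 - u)⁻¹ := by rw [hf]; field_simp; ring
    rw [hf, hf']
    simp only [smul_eq_mul, hfu]
    rw [abs_of_pos (Real.rpow_pos_of_pos h1u _)]
    rw [show 1 + u / (1 - u) = (1 - u)⁻¹ from hfu]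
    rw [Real.div_rpow h0u.le h1u.le, ← Real.rpow_neg_one (1 - u)]
    have e1 : ((1 - u) ^ (-1:ℝ)) ^ α = (1 - u) ^ ((-1) * α) := (Real.rpow_mul h1u.le _ _).symm
    have e2 : u ^ β / (1 - u) ^ β = u ^ β * (1 - u) ^ (-β) := by
      rw [Real.rpow_neg h1u.le, div_eq_mul_inv]
    rw [e1, e2, show (-α - β - 1 - 1 : ℝ) = -2 + (-β + (-1) * α) by ring,
      Real.rpow_add h1u, Real.rpow_add h1u, show (β + 1 - 1 : ℝ) = β by ring]
    ring
  rw [setIntegral_congr_fun measurableSet_Ioo hcongr]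
  rw [← MeasureTheory.integral_Ioc_eq_integral_Ioo,
    ← intervalIntegral.integral_of_le zero_le_one]
  rw [real_beta (β + 1) (-α - β - 1) (by linarith) (by linarith)]
  norm_num

/-- Lemma 1: for `t > 0`, `β > -1` and `α + β + 1 < 0`,
`∫_{(-∞,0]} (t - τ)^α |τ|^β dτ = t^(α+β+1) Γ(-1-α-β) Γ(β+1) / Γ(-α)`. -/
theorem integral_Iic_power (α β t : ℝ) (ht : 0 < t) (hβ : -1 < β)
    (hαβ : α + β + 1 < 0) :
    (∫ τ in Set.Iic (0:ℝ), (t - τ) ^ α * |τ| ^ β) =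
      t ^ (α + β + 1) * Real.Gamma (-1 - α - β) * Real.Gamma (β + 1) / Real.Gamma (-α) := by
  have step1 : (∫ τ in Set.Iic (0:ℝ), (t - τ) ^ α * |τ| ^ β) =
      ∫ s in Ioi (0:ℝ), (t + s) ^ α * |s| ^ β := by
    have h := integral_comp_neg_Iic (0:ℝ) (fun s => (t + s) ^ α * |s| ^ β)
    rw [neg_zero] at h
    rw [← h]
    apply setIntegral_congr_fun measurableSet_Iic
    intro τ hτ
    show (t - τ) ^ α * |τ| ^ β = (t + -τ) ^ α * |(-τ)| ^ β
    rw [abs_neg, sub_eq_add_neg]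
  have step2 : (∫ s in Ioi (0:ℝ), (t + s) ^ α * |s| ^ β) =
      ∫ s in Ioi (0:ℝ), (t + s) ^ α * s ^ β := by
    apply setIntegral_congr_fun measurableSet_Ioi
    intro s hs
    have hs0 : (0:ℝ) < s := hs
    show (t + s) ^ α * |s| ^ β = (t + s) ^ α * s ^ β
    rw [abs_of_pos hs0]
  rw [step1, step2]
  have hmul := integral_comp_mul_left_Ioi (fun s => (t + s) ^ α * s ^ β) 0 ht
  rw [mul_zero] at hmul
  have step3 : (∫ s in Ioi (0:ℝ), (t + s) ^ α * s ^ β) =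
      t * ∫ x in Ioi (0:ℝ), (t + t * x) ^ α * (t * x) ^ β := by
    rw [hmul, smul_eq_mul, ← mul_assoc, mul_inv_cancel₀ ht.ne', one_mul]
  rw [step3]
  have step4 : (∫ x in Ioi (0:ℝ), (t + t * x) ^ α * (t * x) ^ β) =
      t ^ α * t ^ β * ∫ x in Ioi (0:ℝ), x ^ β * (1 + x) ^ α := by
    rw [← MeasureTheory.integral_const_mul]
    apply setIntegral_congr_fun measurableSet_Ioi
    intro x hx
    have hx0 : (0:ℝ) < x := hx
    have h1x : (0:ℝ) < 1 + x := by linarith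
    simp only
    rw [show t + t * x = t * (1 + x) by ring, Real.mul_rpow ht.le h1x.le,
      Real.mul_rpow ht.le hx0.le]
    ring
  rw [step4, beta_Ioi α β hβ hαβ]
  have hpow : t ^ (α + β + 1) = t ^ α * t ^ β * t := by
    rw [Real.rpow_add ht, Real.rpow_add ht, Real.rpow_one]
  rw [show -1 - α - β = -α - β - 1 by ring, hpow]
  ring
end

section
/- Let α, δ, t be real numbers with 0 < α < δ < 1 and t > 0. Then the Weyl fractional integral of order α of |t|^(-δ) satisfies (1/Γ(α)) · ∫_{τ ∈ (-∞, t]} (t - τ)^(α-1) · |τ|^(-δ) dτ = (Γ(δ-α)/Γ(δ)) · (cos(πδ/2 - πα) / cos(πδ/2)) · t^(α-δ). -/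
open MeasureTheory Set Real

lemma beta_cplx_eq_real {x : ℝ} (a b : ℝ) (hx : x ∈ Set.Ioc (0:ℝ) 1) :
    (x:ℂ) ^ ((a:ℂ) - 1) * (1 - (x:ℂ)) ^ ((b:ℂ) - 1)
      = ((x ^ (a-1) * (1-x) ^ (b-1) : ℝ) : ℂ) := by
  have hx0 : (0:ℝ) ≤ x := le_of_lt hx.1
  have hx1 : (0:ℝ) ≤ 1 - x := by linarith [hx.2]
  rw [show ((a:ℂ) - 1) = ((a - 1 : ℝ) : ℂ) by push_cast; ring,
      show ((b:ℂ) - 1) = ((b - 1 : ℝ) : ℂ) by push_cast; ring,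
      show (1 - (x:ℂ)) = (((1 - x : ℝ)) : ℂ) by push_cast; ring,
      ← Complex.ofReal_cpow hx0, ← Complex.ofReal_cpow hx1, ← Complex.ofReal_mul]

lemma beta_integrableOn {a b : ℝ} (ha : 0 < a) (hb : 0 < b) :
    IntegrableOn (fun x : ℝ => x ^ (a-1) * (1-x) ^ (b-1)) (Set.Ioc 0 1) := by
  have h := (Complex.betaIntegral_convergent (u := (a:ℂ)) (v := (b:ℂ)) (by simpa) (by simpa)).1
  have h2 := h.re
  refine MeasureTheory.IntegrableOn.congr_fun h2 (fun x hx => ?_) measurableSet_Ioc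
  simp [beta_cplx_eq_real a b hx]

lemma beta_integral {a b : ℝ} (ha : 0 < a) (hb : 0 < b) :
    ∫ x in Set.Ioc (0:ℝ) 1, x ^ (a-1) * (1-x) ^ (b-1)
      = Real.Gamma a * Real.Gamma b / Real.Gamma (a+b) := by
  have key := Complex.Gamma_mul_Gamma_eq_betaIntegral (s := (a:ℂ)) (t := (b:ℂ))
    (by simpa) (by simpa)
  rw [Complex.betaIntegral] at key
  rw [intervalIntegral.integral_of_le (by norm_num : (0:ℝ) ≤ 1)] at key
  rw [setIntegral_congr_fun measurableSet_Ioc (fun x hx => beta_cplx_eq_real a b hx)] at key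
  have hor : (∫ x in Set.Ioc (0:ℝ) 1, ((x ^ (a-1) * (1-x) ^ (b-1) : ℝ) : ℂ))
      = ((∫ x in Set.Ioc (0:ℝ) 1, x ^ (a-1) * (1-x) ^ (b-1) : ℝ) : ℂ) :=
    integral_ofReal
  rw [hor] at key
  have hab : (0:ℝ) < a + b := by linarith
  have hG : Real.Gamma (a+b) ≠ 0 := (Real.Gamma_pos_of_pos hab).ne'
  rw [show ((a:ℂ) + b) = ((a+b:ℝ):ℂ) by push_cast; ring, Complex.Gamma_ofReal,
      Complex.Gamma_ofReal, Complex.Gamma_ofReal, ← Complex.ofReal_mul, ← Complex.ofReal_mul] at key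
  have := Complex.ofReal_injective key
  rw [eq_div_iff hG]
  linarith [this]

open MeasureTheory Set Real

section
variable {α δ t : ℝ}

lemma himg (ht : 0 < t) : Ioo (0:ℝ) t = (fun x => t * x) '' Ioo 0 1 := by
  rw [Set.image_mul_left_Ioo ht, mul_zero, mul_one]

lemma hderiv (ht : 0 < t) : ∀ x ∈ Ioo (0:ℝ) 1,
    HasDerivWithinAt (fun x => t * x) t (Ioo 0 1) x := fun x _ =>
  ((hasDerivAt_id x).const_mul t).hasDerivWithinAt.congr_deriv (mul_one t)

lemma hinj (ht : 0 < t) : InjOn (fun x => t * x) (Ioo (0:ℝ) 1) :=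
  fun x _ y _ h => mul_left_cancel₀ ht.ne' h

lemma pointB (hα : 0 < α) (hαδ : α < δ) (hδ : δ < 1) (ht : 0 < t) {x : ℝ}
    (hx : x ∈ Ioo (0:ℝ) 1) :
    |t| • ((t - t * x) ^ (α - 1) * |t * x| ^ (-δ))
      = t ^ (α - δ) * (x ^ ((1-δ)-1) * (1-x) ^ (α-1)) := by
  obtain ⟨hx0, hx1⟩ := hx
  have h1 : t - t * x = t * (1 - x) := by ring
  have h2 : (0:ℝ) ≤ 1 - x := by linarith
  rw [abs_of_pos ht, abs_of_pos (by positivity : (0:ℝ) < t * x), h1,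
      Real.mul_rpow ht.le h2, Real.mul_rpow ht.le hx0.le, smul_eq_mul]
  rw [show (1:ℝ)-δ-1 = -δ by ring, show α-δ = 1+(α-1+-δ) by ring, Real.rpow_add ht,
      Real.rpow_one, Real.rpow_add ht]
  ring

end

section
variable {α δ t : ℝ}

lemma intB (hα : 0 < α) (hαδ : α < δ) (hδ : δ < 1) (ht : 0 < t) :
    IntegrableOn (fun τ => (t-τ) ^ (α-1) * |τ| ^ (-δ)) (Ioc 0 t) ∧
    ∫ τ in Ioc (0:ℝ) t, (t-τ) ^ (α-1) * |τ| ^ (-δ)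
      = t ^ (α-δ) * (Real.Gamma (1-δ) * Real.Gamma α / Real.Gamma (1-δ+α)) := by
  have h1δ : 0 < 1 - δ := by linarith
  have hbeta := (beta_integrableOn h1δ hα).mono_set Ioo_subset_Ioc_self
  have hbeta2 : IntegrableOn (fun x => t ^ (α-δ) * (x ^ ((1-δ)-1) * (1-x) ^ (α-1)))
      (Ioo (0:ℝ) 1) := hbeta.const_mul _
  constructor
  · rw [integrableOn_Ioc_iff_integrableOn_Ioo, himg ht,
      integrableOn_image_iff_integrableOn_abs_deriv_smul measurableSet_Ioo (hderiv ht) (hinj ht)]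
    exact hbeta2.congr_fun (fun x hx => (pointB hα hαδ hδ ht hx).symm) measurableSet_Ioo
  · rw [integral_Ioc_eq_integral_Ioo, himg ht,
      integral_image_eq_integral_abs_deriv_smul measurableSet_Ioo (hderiv ht) (hinj ht),
      setIntegral_congr_fun measurableSet_Ioo (fun x hx => pointB hα hαδ hδ ht hx),
      MeasureTheory.integral_const_mul, ← integral_Ioc_eq_integral_Ioo, beta_integral h1δ hα]

end

section
variable {α δ t : ℝ}

lemma himgC (ht : 0 < t) : (fun x : ℝ => t * x⁻¹ - t) '' Ioo 0 1 = Ioi 0 := by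
  ext y
  constructor
  · rintro ⟨x, ⟨hx0, hx1⟩, rfl⟩
    have : 1 < x⁻¹ := (one_lt_inv₀ hx0).mpr hx1
    have : t < t * x⁻¹ := by nlinarith
    simpa using by linarith
  · intro hy
    have hy0 : 0 < y := hy
    refine ⟨t / (t + y), ⟨by positivity, ?_⟩, ?_⟩
    · rw [div_lt_one (by linarith)]; linarith
    · field_simp; ring

lemma hderivC (ht : 0 < t) : ∀ x ∈ Ioo (0:ℝ) 1,
    HasDerivWithinAt (fun x : ℝ => t * x⁻¹ - t) (-(t / x^2)) (Ioo 0 1) x := by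
  intro x hx
  have h := (((hasDerivAt_inv hx.1.ne').const_mul t).sub_const t).hasDerivWithinAt
    (s := Ioo (0:ℝ) 1)
  rw [show -(t / x^2) = t * -(x^2)⁻¹ by ring]
  exact h

lemma hinjC (ht : 0 < t) : InjOn (fun x : ℝ => t * x⁻¹ - t) (Ioo (0:ℝ) 1) := by
  intro x hx y hy h
  simp only [sub_left_inj] at h
  have := mul_left_cancel₀ ht.ne' h
  exact inv_injective this

lemma pointC (hα : 0 < α) (hαδ : α < δ) (hδ : δ < 1) (ht : 0 < t) {x : ℝ}
    (hx : x ∈ Ioo (0:ℝ) 1) :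
    |(-(t / x^2))| • ((t + (t * x⁻¹ - t)) ^ (α - 1) * |t * x⁻¹ - t| ^ (-δ))
      = t ^ (α - δ) * (x ^ ((δ-α)-1) * (1-x) ^ ((1-δ)-1)) := by
  obtain ⟨hx0, hx1⟩ := hx
  have h1x : (0:ℝ) < 1 - x := by linarith
  have hq : t * x⁻¹ - t = t * (1-x) / x := by field_simp
  have hq2 : t + (t * x⁻¹ - t) = t / x := by field_simp; ring
  have hqpos : 0 < t * (1-x) / x := by positivity
  rw [hq2, hq, abs_neg, abs_of_pos (by positivity : 0 < t / x^2), abs_of_pos hqpos, smul_eq_mul]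
  have k1 : (t/x) ^ (α-1) = t ^ (α-1) * x ^ (1-α) := by
    rw [Real.div_rpow ht.le hx0.le, div_eq_mul_inv, ← Real.rpow_neg hx0.le,
      show -(α-1) = 1-α by ring]
  have k2 : (t*(1-x)/x) ^ (-δ) = t ^ (-δ) * (1-x) ^ (-δ) * x ^ δ := by
    rw [Real.div_rpow (by positivity) hx0.le, Real.mul_rpow ht.le h1x.le, div_eq_mul_inv,
      ← Real.rpow_neg hx0.le, neg_neg]
  have k3 : t / x^2 = t ^ (1:ℝ) * x ^ (-2:ℝ) := by
    rw [Real.rpow_one, div_eq_mul_inv, show ((-2:ℝ)) = -((2:ℕ):ℝ) by norm_num,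
      Real.rpow_neg hx0.le, Real.rpow_natCast]
  have kt : t ^ (α-δ) = t ^ (1:ℝ) * t ^ (α-1) * t ^ (-δ) := by
    rw [← Real.rpow_add ht, ← Real.rpow_add ht]; congr 1; ring
  have kx : x ^ ((δ-α)-1) = x ^ (-2:ℝ) * x ^ (1-α) * x ^ δ := by
    rw [← Real.rpow_add hx0, ← Real.rpow_add hx0]; congr 1; ring
  rw [k1, k2, k3, kt, kx, show (1:ℝ)-δ-1 = -δ by ring]
  ring

lemma intC (hα : 0 < α) (hαδ : α < δ) (hδ : δ < 1) (ht : 0 < t) :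
    IntegrableOn (fun s => (t+s) ^ (α-1) * |s| ^ (-δ)) (Ioi 0) ∧
    ∫ s in Ioi (0:ℝ), (t+s) ^ (α-1) * |s| ^ (-δ)
      = t ^ (α-δ) * (Real.Gamma (δ-α) * Real.Gamma (1-δ) / Real.Gamma (1-α)) := by
  have h1δ : 0 < 1 - δ := by linarith
  have hδα : 0 < δ - α := by linarith
  have hbeta := (beta_integrableOn hδα h1δ).mono_set Ioo_subset_Ioc_self
  have hbeta2 : IntegrableOn (fun x => t ^ (α-δ) * (x ^ ((δ-α)-1) * (1-x) ^ ((1-δ)-1)))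
      (Ioo (0:ℝ) 1) := hbeta.const_mul _
  constructor
  · rw [← himgC ht,
      integrableOn_image_iff_integrableOn_abs_deriv_smul measurableSet_Ioo (hderivC ht) (hinjC ht)]
    exact hbeta2.congr_fun (fun x hx => (pointC hα hαδ hδ ht hx).symm) measurableSet_Ioo
  · rw [← himgC ht,
      integral_image_eq_integral_abs_deriv_smul measurableSet_Ioo (hderivC ht) (hinjC ht),
      setIntegral_congr_fun measurableSet_Ioo (fun x hx => pointC hα hαδ hδ ht hx),
      MeasureTheory.integral_const_mul, ← integral_Ioc_eq_integral_Ioo, beta_integral hδα h1δ,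
      show δ - α + (1 - δ) = 1 - α by ring]

end

lemma coeff_id {α δ : ℝ} (hα : 0 < α) (hαδ : α < δ) (hδ : δ < 1) :
    (1 / Real.Gamma α) * (Real.Gamma (δ-α) * Real.Gamma (1-δ) / Real.Gamma (1-α)
        + Real.Gamma (1-δ) * Real.Gamma α / Real.Gamma (1-δ+α))
      = (Real.Gamma (δ-α) / Real.Gamma δ) *
        (Real.cos (π * δ / 2 - π * α) / Real.cos (π * δ / 2)) := by
  have hpi := Real.pi_pos
  have hGα := Real.Gamma_pos_of_pos hα
  have hGδ := Real.Gamma_pos_of_pos (by linarith : (0:ℝ) < δ)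
  have hGδα := Real.Gamma_pos_of_pos (by linarith : (0:ℝ) < δ - α)
  have hG1δ := Real.Gamma_pos_of_pos (by linarith : (0:ℝ) < 1 - δ)
  have hG1α := Real.Gamma_pos_of_pos (by linarith : (0:ℝ) < 1 - α)
  have hG1δα := Real.Gamma_pos_of_pos (by linarith : (0:ℝ) < 1 - δ + α)
  have hsα : 0 < Real.sin (π * α) :=
    Real.sin_pos_of_pos_of_lt_pi (by positivity) (by nlinarith)
  have hsδ : 0 < Real.sin (π * δ) :=
    Real.sin_pos_of_pos_of_lt_pi (by nlinarith) (by nlinarith)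
  have hsδα : 0 < Real.sin (π * (δ - α)) :=
    Real.sin_pos_of_pos_of_lt_pi (by nlinarith) (by nlinarith)
  have hc : 0 < Real.cos (π * δ / 2) :=
    Real.cos_pos_of_mem_Ioo ⟨by nlinarith, by nlinarith⟩
  have R1 := Real.Gamma_mul_Gamma_one_sub δ
  rw [eq_div_iff hsδ.ne'] at R1
  have R2 := Real.Gamma_mul_Gamma_one_sub α
  rw [eq_div_iff hsα.ne'] at R2
  have R3 := Real.Gamma_mul_Gamma_one_sub (δ - α)
  rw [eq_div_iff hsδα.ne', show (1:ℝ) - (δ - α) = 1 - δ + α by ring] at R3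
  have T1 : Real.sin (π * δ) = 2 * Real.sin (π * δ / 2) * Real.cos (π * δ / 2) := by
    have h := Real.sin_two_mul (π * δ / 2)
    rw [show 2 * (π * δ / 2) = π * δ by ring] at h
    exact h
  have T2 : Real.sin (π * (δ - α)) + Real.sin (π * α)
      = 2 * Real.sin (π * δ / 2) * Real.cos (π * δ / 2 - π * α) := by
    have h1 := Real.sin_add (π*δ/2) (π*δ/2 - π*α)
    have h2 := Real.sin_sub (π*δ/2) (π*δ/2 - π*α)
    rw [show π*δ/2 + (π*δ/2 - π*α) = π*(δ-α) by ring] at h1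
    rw [show π*δ/2 - (π*δ/2 - π*α) = π*α by ring] at h2
    linear_combination h1 + h2
  have hsh : 0 < Real.sin (π * δ / 2) :=
    Real.sin_pos_of_pos_of_lt_pi (by nlinarith) (by nlinarith)
  field_simp
  rw [show π * (δ - α * 2) / 2 = π * δ / 2 - π * α by ring, show δ * π / 2 = π * δ / 2 by ring,
    eq_div_iff hc.ne']
  refine mul_right_cancel₀ (show Real.sin (π*δ) * Real.sin (π*(δ-α)) * Real.sin (π*α) ≠ 0
    by positivity) ?_
  linear_combination (Real.cos (π*δ/2) * Real.sin (π*(δ-α)) * Real.sin (π*α) *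
      (Real.Gamma (δ-α) * Real.Gamma (1-δ+α) + Real.Gamma α * Real.Gamma (1-α))) * R1
    + (π * Real.cos (π*δ/2) * Real.sin (π*(δ-α))
        - π * Real.cos (π*δ/2 - π*α) * Real.sin (π*δ)
        - Real.cos (π*δ/2 - π*α) * Real.sin (π*δ) *
          (Real.Gamma (δ-α) * Real.Gamma (1-δ+α) * Real.sin (π*(δ-α)) - π)) * R2
    + (π * Real.cos (π*δ/2) * Real.sin (π*α)
        - π * Real.cos (π*δ/2 - π*α) * Real.sin (π*δ)) * R3
    + (π^2 * Real.cos (π*δ/2)) * T2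
    - (π^2 * Real.cos (π*δ/2 - π*α)) * T1

/-- Theorem 2: Weyl fractional integral of order `α` of `|t|^(-δ)` for
`0 < α < δ < 1` and `t > 0`. -/
theorem weyl_fracInt_abs_rpow (α δ t : ℝ) (hα : 0 < α) (hαδ : α < δ) (hδ : δ < 1)
    (ht : 0 < t) :
    (1 / Real.Gamma α) * (∫ τ in Set.Iic t, (t - τ) ^ (α - 1) * |τ| ^ (-δ)) =
      (Real.Gamma (δ - α) / Real.Gamma δ) *
        (Real.cos (Real.pi * δ / 2 - Real.pi * α) / Real.cos (Real.pi * δ / 2)) *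
        t ^ (α - δ) := by
  have A : MeasurableEmbedding fun x : ℝ => -x :=
    (Homeomorph.neg ℝ).isClosedEmbedding.measurableEmbedding
  -- integrability on Iic 0
  have hC := intC hα hαδ hδ ht
  have hInt0 : IntegrableOn (fun τ : ℝ => (t - τ) ^ (α - 1) * |τ| ^ (-δ)) (Iic 0) := by
    have h1 : IntegrableOn (fun s => (t+s) ^ (α-1) * |s| ^ (-δ)) (Ioi 0) (Measure.map (fun x : ℝ => -x) volume) := by
      rw [Measure.map_neg_eq_self]; exact hC.1
    have h2 := (A.integrableOn_map_iff).mp h1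
    have h3 : (fun x : ℝ => -x) ⁻¹' Ioi 0 = Iio (0:ℝ) := by
      ext x; simp
    rw [h3] at h2
    have h4 : IntegrableOn (fun τ : ℝ => (t - τ) ^ (α - 1) * |τ| ^ (-δ)) (Iio 0) := by
      refine h2.congr_fun (fun x hx => ?_) measurableSet_Iio
      simp [Function.comp, sub_eq_add_neg]
    rwa [integrableOn_Iic_iff_integrableOn_Iio]
  -- value on Iic 0
  have hval0 : (∫ τ in Iic (0:ℝ), (t - τ) ^ (α - 1) * |τ| ^ (-δ))
      = t ^ (α-δ) * (Real.Gamma (δ-α) * Real.Gamma (1-δ) / Real.Gamma (1-α)) := by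
    have h := integral_comp_neg_Iic (0:ℝ) (fun s => (t+s) ^ (α-1) * |s| ^ (-δ))
    rw [neg_zero] at h
    rw [← hC.2, ← h]
    refine setIntegral_congr_fun measurableSet_Iic (fun τ _ => ?_)
    simp [sub_eq_add_neg]
  have hB := intB hα hαδ hδ ht
  have hsplit : (∫ τ in Set.Iic t, (t - τ) ^ (α - 1) * |τ| ^ (-δ))
      = (∫ τ in Iic (0:ℝ), (t - τ) ^ (α - 1) * |τ| ^ (-δ))
        + ∫ τ in Ioc (0:ℝ) t, (t - τ) ^ (α - 1) * |τ| ^ (-δ) := by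
    rw [← setIntegral_union (Set.Iic_disjoint_Ioc le_rfl) measurableSet_Ioc hInt0 hB.1,
      Set.Iic_union_Ioc_eq_Iic ht.le]
  rw [hsplit, hval0, hB.2]
  have hkey := coeff_id hα hαδ hδ
  calc (1 / Real.Gamma α) *
        (t ^ (α-δ) * (Real.Gamma (δ-α) * Real.Gamma (1-δ) / Real.Gamma (1-α))
          + t ^ (α-δ) * (Real.Gamma (1-δ) * Real.Gamma α / Real.Gamma (1-δ+α)))
      = ((1 / Real.Gamma α) * (Real.Gamma (δ-α) * Real.Gamma (1-δ) / Real.Gamma (1-α)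
          + Real.Gamma (1-δ) * Real.Gamma α / Real.Gamma (1-δ+α))) * t ^ (α-δ) := by ring
    _ = _ := by rw [hkey]
end

section
/- Let α, z be real numbers with α > 0 and z ≥ 0. Then the lower incomplete gamma function satisfies ∫₀^z t^(α-1) e^(-t) dt = z^α · Γ(α) · e^(-z) · ∑_{k=0}^∞ z^k / Γ(k + 1 + α), where the series is the two-parameter Mittag–Leffler function E_{1,1+α}(z) = ∑_{k=0}^∞ z^k / Γ(k + 1 + α). -/
open intervalIntegral Real Set Filter Finset

private lemma ofReal_int_aux (β z : ℝ) (hz : 0 ≤ z) :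
    ((∫ t in (0:ℝ)..z, t ^ (β - 1) * Real.exp (-t) : ℝ) : ℂ) = Complex.partialGamma β z := by
  rw [Complex.partialGamma, ← intervalIntegral.integral_ofReal]
  apply intervalIntegral.integral_congr
  intro x hx
  rw [Set.uIcc_of_le hz] at hx
  show ((x ^ (β - 1) * Real.exp (-x) : ℝ) : ℂ) = _
  rw [Complex.ofReal_mul, Complex.ofReal_cpow hx.1]
  push_cast
  ring

private lemma recur_aux (β z : ℝ) (hβ : 0 < β) (hz : 0 ≤ z) :
    (∫ t in (0:ℝ)..z, t ^ (β + 1 - 1) * Real.exp (-t)) =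
      β * (∫ t in (0:ℝ)..z, t ^ (β - 1) * Real.exp (-t)) - Real.exp (-z) * z ^ β := by
  have h := Complex.partialGamma_add_one (s := (β:ℂ)) (by simpa using hβ) hz
  apply Complex.ofReal_injective
  rw [ofReal_int_aux _ _ hz]
  push_cast
  rw [h, ← ofReal_int_aux β z hz, ← Complex.ofReal_cpow hz, Complex.ofReal_exp]
  push_cast
  ring

private lemma claim_aux (α z : ℝ) (hα : 0 < α) (hz : 0 ≤ z) (n : ℕ) :
    (∫ t in (0:ℝ)..z, t ^ (α - 1) * Real.exp (-t)) =
      Real.exp (-z) * (∑ k ∈ Finset.range n, z ^ (α + k) * Real.Gamma α / Real.Gamma (α + k + 1))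
      + Real.Gamma α / Real.Gamma (α + n) *
        ∫ t in (0:ℝ)..z, t ^ (α + n - 1) * Real.exp (-t) := by
  induction n with
  | zero =>
    simp [div_self (Real.Gamma_pos_of_pos hα).ne']
  | succ n ih =>
    have hβ : (0:ℝ) < α + n := by positivity
    have hrec := recur_aux (α + n) z hβ hz
    have hG : Real.Gamma (α + n + 1) = (α + n) * Real.Gamma (α + n) :=
      Real.Gamma_add_one hβ.ne'
    have hGpos := Real.Gamma_pos_of_pos hβ
    rw [ih, Finset.sum_range_succ]
    have hcast : α + ((n : ℝ) + 1) - 1 = α + n + 1 - 1 := by ring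
    push_cast
    rw [hcast, show α + ((n:ℝ) + 1) = α + (n:ℝ) + 1 from by ring, hrec, hG]
    field_simp
    rw [show (∑ x ∈ Finset.range n, Real.Gamma α * z ^ (α + ((x:ℕ):ℝ)) / Real.Gamma (α + ((x:ℕ):ℝ) + 1)) = ∑ x ∈ Finset.range n, z ^ (α + ((x:ℕ):ℝ)) * Real.Gamma α / Real.Gamma (α + ((x:ℕ):ℝ) + 1) from Finset.sum_congr rfl fun _ _ => by ring]
    ring

private lemma gamma_lb_aux (α : ℝ) (hα : 0 < α) (n : ℕ) :
    α * Real.Gamma α * n.factorial ≤ Real.Gamma (α + n + 1) := by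
  induction n with
  | zero =>
    simp [Real.Gamma_add_one hα.ne']
  | succ n ih =>
    have hβ : (0:ℝ) < α + n + 1 := by positivity
    have hG : Real.Gamma (α + ((n:ℝ)+1) + 1) = (α + n + 1) * Real.Gamma (α + n + 1) := by
      rw [show α + ((n:ℝ)+1) + 1 = (α + (n:ℝ) + 1) + 1 from by ring, Real.Gamma_add_one hβ.ne']
    rw [show ((n+1:ℕ):ℝ) = (n:ℝ)+1 from by push_cast; ring, hG]
    have h1 : ((n:ℝ) + 1) * (α * Real.Gamma α * n.factorial) ≤
        (α + n + 1) * Real.Gamma (α + n + 1) := by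
      apply mul_le_mul (by linarith) ih (by positivity) (by linarith)
    calc α * Real.Gamma α * (n+1).factorial
        = ((n:ℝ) + 1) * (α * Real.Gamma α * n.factorial) := by
          rw [Nat.factorial_succ]; push_cast; ring
      _ ≤ _ := h1

/-- Lemma 2: `γ(α, z) = z^α Γ(α) e^(-z) E_{1,1+α}(z)`, where
`E_{1,1+α}(z) = ∑_{k=0}^∞ z^k / Γ(k + 1 + α)`. -/
theorem lowerIncompleteGamma_eq_mittagLeffler (α z : ℝ) (hα : 0 < α) (hz : 0 ≤ z) :
    (∫ t in (0:ℝ)..z, t ^ (α - 1) * Real.exp (-t)) =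
      z ^ α * Real.Gamma α * Real.exp (-z) *
        ∑' k : ℕ, z ^ k / Real.Gamma (k + 1 + α) := by
  rcases eq_or_lt_of_le hz with rfl | hz'
  · simp [Real.zero_rpow hα.ne']
  set I := ∫ t in (0:ℝ)..z, t ^ (α - 1) * Real.exp (-t) with hI
  set C := z ^ α * Real.Gamma α * Real.exp (-z) with hC
  have hGα := Real.Gamma_pos_of_pos hα
  have hCpos : 0 < C := by positivity
  -- remainder bound
  have hRbound : ∀ n : ℕ,
      ‖Real.Gamma α / Real.Gamma (α + (n+1 : ℕ)) *
        ∫ t in (0:ℝ)..z, t ^ (α + (n+1 : ℕ) - 1) * Real.exp (-t)‖ ≤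
      (z ^ (α+1) / α) * (z ^ n / n.factorial) := by
    intro n
    have hβ : (0:ℝ) < α + (n+1:ℕ) := by positivity
    have hGβ := Real.Gamma_pos_of_pos hβ
    have hint : ‖∫ t in (0:ℝ)..z, t ^ (α + (n+1:ℕ) - 1) * Real.exp (-t)‖ ≤
        z ^ (α + (n:ℝ)) * z := by
      have key : ∀ x ∈ Set.uIoc (0:ℝ) z,
          ‖x ^ (α + (n+1:ℕ) - 1) * Real.exp (-x)‖ ≤ z ^ (α + (n:ℝ)) := ?_
      · have := intervalIntegral.norm_integral_le_of_norm_le_const key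
        rwa [sub_zero, abs_of_pos hz'] at this
      intro x hx
      rw [Set.uIoc_of_le hz] at hx
      have hx0 : 0 < x := hx.1
      have hexp : Real.exp (-x) ≤ 1 := Real.exp_le_one_iff.mpr (by linarith)
      have hx1 : x ^ (α + (n+1:ℕ) - 1) ≤ z ^ (α + (n:ℝ)) := by
        rw [show α + ((n:ℕ)+1:ℕ) - 1 = α + (n:ℝ) from by push_cast; ring]
        exact Real.rpow_le_rpow hx0.le hx.2 (by positivity)
      have := mul_le_mul hx1 hexp (Real.exp_pos _).le (by positivity)
      rw [Real.norm_eq_abs, abs_of_nonneg (by positivity)]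
      simpa using this
    have hGlb : α * Real.Gamma α * n.factorial ≤ Real.Gamma (α + (n+1:ℕ)) := by
      have := gamma_lb_aux α hα n
      rwa [show α + ((n:ℕ)+1:ℕ) = α + (n:ℝ) + 1 from by push_cast; ring]
    have hfacpos : (0:ℝ) < n.factorial := by positivity
    rw [norm_mul, norm_div, Real.norm_eq_abs, Real.norm_eq_abs,
      abs_of_pos hGα, abs_of_pos hGβ]
    calc Real.Gamma α / Real.Gamma (α + (n+1:ℕ)) * ‖_‖
        ≤ Real.Gamma α / (α * Real.Gamma α * n.factorial) * (z ^ (α + (n:ℝ)) * z) := by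
          apply mul_le_mul _ hint (norm_nonneg _) (by positivity)
          exact div_le_div_of_nonneg_left hGα.le (by positivity) hGlb
      _ = (z ^ (α+1) / α) * (z ^ n / n.factorial) := by
          rw [show z ^ (α + (n:ℝ)) * z = z ^ (α+1) * z ^ n from by
            rw [← Real.rpow_natCast z n, ← Real.rpow_add hz', ← Real.rpow_add_one hz'.ne']
            congr 1
            ring]
          field_simp
  -- remainder tends to zero
  have hR0 : Tendsto (fun n : ℕ => Real.Gamma α / Real.Gamma (α + (n+1 : ℕ)) *
      ∫ t in (0:ℝ)..z, t ^ (α + (n+1 : ℕ) - 1) * Real.exp (-t)) atTop (nhds 0) := by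
    apply squeeze_zero_norm hRbound
    simpa using (FloorSemiring.tendsto_pow_div_factorial_atTop z).const_mul (z ^ (α+1) / α)
  -- partial sums identity
  have hterm : ∀ k : ℕ, Real.exp (-z) * (z ^ (α + (k:ℝ)) * Real.Gamma α / Real.Gamma (α + k + 1))
      = C * (z ^ k / Real.Gamma (k + 1 + α)) := by
    intro k
    rw [hC, show α + (k:ℝ) + 1 = (k:ℝ) + 1 + α from by ring,
      show z ^ (α + (k:ℝ)) = z ^ α * z ^ k from by
        rw [← Real.rpow_natCast z k, ← Real.rpow_add hz']]
    ring
  have hpartial : ∀ m : ℕ,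
      Real.exp (-z) * (∑ k ∈ Finset.range m, z ^ (α + k) * Real.Gamma α / Real.Gamma (α + k + 1))
      = C * ∑ k ∈ Finset.range m, z ^ k / Real.Gamma (k + 1 + α) := by
    intro m
    rw [Finset.mul_sum, Finset.mul_sum]
    exact Finset.sum_congr rfl fun k _ => hterm k
  -- the partial sums tend to I
  have hps : Tendsto (fun m : ℕ => C * ∑ k ∈ Finset.range m, z ^ k / Real.Gamma (k + 1 + α))
      atTop (nhds I) := by
    rw [← Filter.tendsto_add_atTop_iff_nat 1]
    have : ∀ n : ℕ, C * ∑ k ∈ Finset.range (n+1), z ^ k / Real.Gamma (k + 1 + α)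
        = I - Real.Gamma α / Real.Gamma (α + (n+1 : ℕ)) *
            ∫ t in (0:ℝ)..z, t ^ (α + (n+1 : ℕ) - 1) * Real.exp (-t) := by
      intro n
      rw [← hpartial, eq_sub_iff_add_eq, ← claim_aux α z hα hz (n+1)]
    simp only [this]
    simpa using tendsto_const_nhds.sub hR0
  have hsum : HasSum (fun k : ℕ => z ^ k / Real.Gamma (k + 1 + α)) (I / C) := by
    rw [hasSum_iff_tendsto_nat_of_nonneg]
    · have := hps.const_mul (1 / C)
      simp only [← mul_assoc, one_div_mul_cancel hCpos.ne', one_mul] at this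
      convert this using 2
      field_simp
    · intro k
      have : (0:ℝ) < Real.Gamma ((k:ℝ) + 1 + α) := Real.Gamma_pos_of_pos (by positivity)
      positivity
  rw [hsum.tsum_eq, mul_comm, div_mul_cancel₀ _ hCpos.ne']
end

section
/- Let α, λ, t be real numbers with α > 0 and t > 0. Then the Riemann–Liouville fractional integral of order α (with lower terminal 0) of the exponential function satisfies (1/Γ(α)) · ∫₀ᵗ (t - τ)^(α-1) · e^(λτ) dτ = t^α · ∑_{k=0}^∞ (λt)^k / Γ(k + 1 + α), i.e. it equals t^α · E_{1,1+α}(λt). -/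
open MeasureTheory intervalIntegral

lemma beta_nat_aux {α : ℝ} (hα : 0 < α) (k : ℕ) :
    ∫ x in (0:ℝ)..1, x ^ k * (1 - x) ^ (α - 1) =
      Real.Gamma α * k.factorial / Real.Gamma (k + 1 + α) := by
  have hs : (0:ℝ) < Complex.re (k + 1) := by simp; positivity
  have ht : (0:ℝ) < Complex.re (α : ℂ) := by simpa using hα
  have hB := Complex.Gamma_mul_Gamma_eq_betaIntegral hs ht
  have hBeq : Complex.betaIntegral (k + 1) α =
      ((∫ x in (0:ℝ)..1, x ^ k * (1 - x) ^ (α - 1) : ℝ) : ℂ) := by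
    rw [Complex.betaIntegral, ← intervalIntegral.integral_ofReal]
    refine intervalIntegral.integral_congr fun x hx => ?_
    rw [Set.uIcc_of_le zero_le_one] at hx
    have hx0 : (0:ℝ) ≤ x := hx.1
    have hx1 : (0:ℝ) ≤ 1 - x := by linarith [hx.2]
    rw [show ((k:ℂ) + 1 - 1) = ((k:ℕ):ℂ) by ring, Complex.cpow_natCast,
      show ((1:ℂ) - (x:ℂ)) = ((1 - x : ℝ) : ℂ) by push_cast; ring,
      show ((α:ℂ) - 1) = ((α - 1 : ℝ) : ℂ) by push_cast; ring,
      ← Complex.ofReal_cpow hx1]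
    push_cast
    ring
  rw [hBeq] at hB
  have hG1 : Complex.Gamma (k + 1) = (k.factorial : ℂ) := by
    exact_mod_cast Complex.Gamma_nat_eq_factorial k
  have hG2 : Complex.Gamma (α : ℂ) = (Real.Gamma α : ℂ) := Complex.Gamma_ofReal α
  have hG3 : Complex.Gamma ((k:ℂ) + 1 + α) = (Real.Gamma (k + 1 + α) : ℂ) := by
    rw [show ((k:ℂ) + 1 + α) = ((k + 1 + α : ℝ) : ℂ) by push_cast; ring]
    exact Complex.Gamma_ofReal _
  rw [hG1, hG2, hG3] at hB
  have hB' : (k.factorial : ℝ) * Real.Gamma α =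
      Real.Gamma (k + 1 + α) * ∫ x in (0:ℝ)..1, x ^ k * (1 - x) ^ (α - 1) := by
    exact_mod_cast hB
  have hGpos : 0 < Real.Gamma (k + 1 + α) :=
    Real.Gamma_pos_of_pos (by positivity)
  field_simp
  linarith [hB']

lemma keyInt {α t : ℝ} (hα : 0 < α) (ht : 0 < t) (k : ℕ) :
    ∫ τ in (0:ℝ)..t, (t - τ) ^ (α - 1) * τ ^ k =
      Real.Gamma α * k.factorial * (t ^ α * t ^ k) / Real.Gamma (k + 1 + α) := by
  have hsub := intervalIntegral.smul_integral_comp_mul_left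
    (f := fun τ => (t - τ) ^ (α - 1) * τ ^ k) (a := (0:ℝ)) (b := 1) t
  simp only [mul_zero, mul_one] at hsub
  rw [← hsub]
  have hcongr : ∫ x in (0:ℝ)..1, (t - t * x) ^ (α - 1) * (t * x) ^ k =
      ∫ x in (0:ℝ)..1, (t ^ (α - 1) * t ^ k) * (x ^ k * (1 - x) ^ (α - 1)) := by
    refine intervalIntegral.integral_congr fun x hx => ?_
    rw [Set.uIcc_of_le zero_le_one] at hx
    have hx1 : (0:ℝ) ≤ 1 - x := by linarith [hx.2]
    rw [show t - t * x = t * (1 - x) by ring, Real.mul_rpow ht.le hx1, mul_pow]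
    ring
  rw [hcongr, intervalIntegral.integral_const_mul, beta_nat_aux hα k]
  rw [smul_eq_mul, show t * (t ^ (α - 1) * t ^ k *
      (Real.Gamma α * k.factorial / Real.Gamma (k + 1 + α))) =
      (t * t ^ (α - 1)) * t ^ k * (Real.Gamma α * k.factorial / Real.Gamma (k + 1 + α)) by ring]
  rw [show t * t ^ (α - 1) = t ^ (1:ℝ) * t ^ (α - 1) by rw [Real.rpow_one],
    ← Real.rpow_add ht, show (1:ℝ) + (α - 1) = α by ring]
  ring

lemma keyIntg {α : ℝ} (hα : 0 < α) (t : ℝ) (k : ℕ) :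
    IntervalIntegrable (fun τ => (t - τ) ^ (α - 1) * τ ^ k) volume 0 t := by
  have h1 : IntervalIntegrable (fun x : ℝ => x ^ (α - 1)) volume t 0 :=
    intervalIntegrable_rpow' (by linarith)
  have h2 := h1.comp_sub_left t
  simp only [sub_self, sub_zero] at h2
  exact h2.mul_continuousOn (Continuous.continuousOn (by continuity))

/-- Theorem 3: Riemann–Liouville fractional integral of order `α` (lower terminal 0)
of the exponential: `₀I_t^α e^(λt) = t^α E_{1,1+α}(λt)`. -/
theorem rl_fracInt_exp (α lam t : ℝ) (hα : 0 < α) (ht : 0 < t) :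
    (1 / Real.Gamma α) * (∫ τ in (0:ℝ)..t, (t - τ) ^ (α - 1) * Real.exp (lam * τ)) =
      t ^ α * ∑' k : ℕ, (lam * t) ^ k / Real.Gamma (k + 1 + α) := by
  have hGα : 0 < Real.Gamma α := Real.Gamma_pos_of_pos hα
  set F : ℕ → ℝ → ℝ := fun k τ => (lam ^ k / k.factorial) * ((t - τ) ^ (α - 1) * τ ^ k) with hF
  -- pointwise expansion
  have hpt : ∀ τ : ℝ, (t - τ) ^ (α - 1) * Real.exp (lam * τ) = ∑' k, F k τ := by
    intro τ
    rw [Real.exp_eq_exp_ℝ, NormedSpace.exp_eq_tsum_div, ← tsum_mul_left]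
    refine tsum_congr fun k => ?_
    simp only [hF, mul_pow, smul_eq_mul]
    ring
  -- integrability
  have hFint : ∀ k, MeasureTheory.IntegrableOn (F k) (Set.Ioc 0 t) := by
    intro k
    rw [← intervalIntegrable_iff_integrableOn_Ioc_of_le ht.le]
    exact (keyIntg hα t k).const_mul _
  -- Gamma lower bound
  have hGammaLB : ∀ k : ℕ, Real.Gamma α * α * k.factorial ≤ Real.Gamma (k + 1 + α) := by
    intro k
    induction k with
    | zero =>
      simp only [Nat.cast_zero, zero_add, Nat.factorial_zero, Nat.cast_one, mul_one]
      rw [show (1:ℝ) + α = α + 1 by ring, Real.Gamma_add_one hα.ne']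
      linarith
    | succ n ih =>
      have h1 : ((n:ℝ) + 1) + 1 + α = ((n:ℝ) + 1 + α) + 1 := by ring
      rw [Nat.cast_succ, h1, Real.Gamma_add_one (by positivity)]
      calc Real.Gamma α * α * ((n+1).factorial : ℝ)
          = ((n:ℝ) + 1) * (Real.Gamma α * α * n.factorial) := by
            rw [Nat.factorial_succ]; push_cast; ring
        _ ≤ ((n:ℝ) + 1) * Real.Gamma (n + 1 + α) := by
            have hn1 : (0:ℝ) < (n:ℝ) + 1 := by positivity
            exact mul_le_mul_of_nonneg_left ih hn1.le
        _ ≤ ((n:ℝ) + 1 + α) * Real.Gamma (n + 1 + α) := by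
            have := Real.Gamma_pos_of_pos (show (0:ℝ) < (n:ℝ) + 1 + α by positivity)
            nlinarith
  -- value of each integral
  have hval : ∀ k : ℕ, ∫ τ in (0:ℝ)..t, F k τ =
      Real.Gamma α * (t ^ α) * ((lam * t) ^ k / Real.Gamma (k + 1 + α)) := by
    intro k
    rw [hF]
    rw [intervalIntegral.integral_const_mul, keyInt hα ht k]
    have hfac : (k.factorial : ℝ) ≠ 0 := Nat.cast_ne_zero.mpr k.factorial_ne_zero
    have hG : Real.Gamma ((k:ℝ) + 1 + α) ≠ 0 :=
      (Real.Gamma_pos_of_pos (by positivity)).ne'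
    field_simp
    ring
  -- norm integrals
  have hnorm : ∀ k : ℕ, ∫ τ in Set.Ioc (0:ℝ) t, ‖F k τ‖ =
      Real.Gamma α * (t ^ α) * ((|lam| * t) ^ k / Real.Gamma (k + 1 + α)) := by
    intro k
    have : ∀ τ ∈ Set.Ioc (0:ℝ) t, ‖F k τ‖ =
        (|lam| ^ k / k.factorial) * ((t - τ) ^ (α - 1) * τ ^ k) := by
      intro τ hτ
      have h1 : (0:ℝ) ≤ (t - τ) ^ (α - 1) := Real.rpow_nonneg (by linarith [hτ.2]) _
      have h2 : (0:ℝ) ≤ τ ^ k := pow_nonneg hτ.1.le k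
      rw [hF, Real.norm_eq_abs, abs_mul, abs_div, abs_pow, abs_of_nonneg (mul_nonneg h1 h2),
        Nat.abs_cast]
    rw [MeasureTheory.setIntegral_congr_fun measurableSet_Ioc this,
      ← intervalIntegral.integral_of_le ht.le, intervalIntegral.integral_const_mul,
      keyInt hα ht k]
    have hfac : (k.factorial : ℝ) ≠ 0 := Nat.cast_ne_zero.mpr k.factorial_ne_zero
    have hG : Real.Gamma ((k:ℝ) + 1 + α) ≠ 0 :=
      (Real.Gamma_pos_of_pos (by positivity)).ne'
    field_simp
    ring
  -- summability of norm integrals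
  have hsum : Summable fun k : ℕ => ∫ τ in Set.Ioc (0:ℝ) t, ‖F k τ‖ := by
    simp only [hnorm]
    apply Summable.mul_left
    refine Summable.of_nonneg_of_le (fun k => by positivity) (fun k => ?_)
      (((Real.summable_pow_div_factorial (|lam| * t)).mul_left (1 / (Real.Gamma α * α))))
    have hG := hGammaLB k
    have hfac : (0:ℝ) < k.factorial := by exact_mod_cast k.factorial_pos
    calc (|lam| * t) ^ k / Real.Gamma ((k:ℝ) + 1 + α)
        ≤ (|lam| * t) ^ k / (Real.Gamma α * α * k.factorial) := by
          gcongr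
      _ = 1 / (Real.Gamma α * α) * ((|lam| * t) ^ k / k.factorial) := by
          field_simp
  -- swap sum and integral
  have hvalS : ∀ k : ℕ, ∫ τ in Set.Ioc (0:ℝ) t, F k τ =
      Real.Gamma α * (t ^ α) * ((lam * t) ^ k / Real.Gamma (k + 1 + α)) := by
    intro k
    rw [← intervalIntegral.integral_of_le ht.le]
    exact hval k
  have hswap : ∫ τ in (0:ℝ)..t, (t - τ) ^ (α - 1) * Real.exp (lam * τ) =
      ∑' k, ∫ τ in Set.Ioc (0:ℝ) t, F k τ := by
    rw [intervalIntegral.integral_of_le ht.le]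
    rw [show (∫ τ in Set.Ioc (0:ℝ) t, (t - τ) ^ (α - 1) * Real.exp (lam * τ)) =
        ∫ τ in Set.Ioc (0:ℝ) t, ∑' k, F k τ from
      MeasureTheory.setIntegral_congr_fun measurableSet_Ioc (fun τ _ => hpt τ)]
    exact (MeasureTheory.integral_tsum_of_summable_integral_norm hFint hsum).symm
  rw [hswap, tsum_congr hvalS, tsum_mul_left]
  field_simp
end

section
/- Let a, b be real numbers with a > 0 and b > 0. Then ∫₀¹ t^(a-1) · (1-t)^(b-1) · log t dt = (Γ(a) · Γ(b) / Γ(a+b)) · (ψ(a) - ψ(a+b)), where ψ denotes the digamma function. -/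
open MeasureTheory Set Real Metric Filter

/-- The digamma function `ψ(x) = Γ'(x)/Γ(x)`. -/
noncomputable def digamma (x : ℝ) : ℝ := deriv Real.Gamma x / Real.Gamma x

lemma ofReal_beta_integrand {x y t : ℝ} (h0 : 0 ≤ t) (h1 : t ≤ 1) :
    (t : ℂ) ^ ((x : ℂ) - 1) * (1 - (t : ℂ)) ^ ((y : ℂ) - 1) =
      ((t ^ (x - 1) * (1 - t) ^ (y - 1) : ℝ) : ℂ) := by
  rw [show ((x:ℂ) - 1) = ((x - 1 : ℝ) : ℂ) by push_cast; ring,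
      show ((y:ℂ) - 1) = ((y - 1 : ℝ) : ℂ) by push_cast; ring,
      show (1 - (t:ℂ)) = ((1 - t : ℝ) : ℂ) by push_cast; ring,
      ← Complex.ofReal_cpow h0, ← Complex.ofReal_cpow (by linarith), ← Complex.ofReal_mul]

lemma betaIntegrand_integrableOn {x y : ℝ} (hx : 0 < x) (hy : 0 < y) :
    IntegrableOn (fun t : ℝ => t ^ (x - 1) * (1 - t) ^ (y - 1)) (Set.Ioo 0 1) := by
  have h := Complex.betaIntegral_convergent (u := x) (v := y) (by simpa using hx) (by simpa using hy)
  have h2 : IntegrableOn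
      (fun t : ℝ => ((t:ℂ) ^ ((x:ℂ) - 1) * (1 - (t:ℂ)) ^ ((y:ℂ) - 1)).re) (Set.Ioc 0 1) :=
    ((intervalIntegrable_iff_integrableOn_Ioc_of_le zero_le_one).mp h).re
  refine (h2.mono_set Ioo_subset_Ioc_self).congr_fun (fun t ht => ?_) measurableSet_Ioo
  dsimp only
  rw [ofReal_beta_integrand ht.1.le ht.2.le, Complex.ofReal_re]

lemma betaIntegral_real {x y : ℝ} (hx : 0 < x) (hy : 0 < y) :
    (∫ t in (0:ℝ)..1, t ^ (x - 1) * (1 - t) ^ (y - 1)) =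
      Real.Gamma x * Real.Gamma y / Real.Gamma (x + y) := by
  have key := Complex.Gamma_mul_Gamma_eq_betaIntegral (s := x) (t := y)
    (by simpa using hx) (by simpa using hy)
  have hC : Complex.betaIntegral x y =
      ((∫ t in (0:ℝ)..1, t ^ (x - 1) * (1 - t) ^ (y - 1) : ℝ) : ℂ) := by
    rw [Complex.betaIntegral, ← intervalIntegral.integral_ofReal]
    refine intervalIntegral.integral_congr (fun t ht => ?_)
    rw [uIcc_of_le zero_le_one] at ht
    exact ofReal_beta_integrand ht.1 ht.2
  rw [hC, ← Complex.ofReal_add x y, Complex.Gamma_ofReal, Complex.Gamma_ofReal,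
    Complex.Gamma_ofReal, ← Complex.ofReal_mul, ← Complex.ofReal_mul] at key
  have := Complex.ofReal_inj.mp key
  have hne : Real.Gamma (x + y) ≠ 0 := (Real.Gamma_pos_of_pos (by linarith)).ne'
  field_simp
  linarith [this]

lemma hasDerivAt_gammaQuot {b x : ℝ} (hb : 0 < b) (hx : 0 < x) :
    HasDerivAt (fun s => Real.Gamma s * Real.Gamma b / Real.Gamma (s + b))
      ((Real.Gamma x * Real.Gamma b / Real.Gamma (x + b)) * (digamma x - digamma (x + b))) x := by
  have hne : ∀ z : ℝ, 0 < z → ∀ m : ℕ, z ≠ -m := by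
    intro z hz m h
    have : (0:ℝ) ≤ (m:ℝ) := Nat.cast_nonneg m
    linarith [h ▸ hz]
  have hΓ : HasDerivAt Real.Gamma (deriv Real.Gamma x) x :=
    (Real.differentiableAt_Gamma (hne x hx)).hasDerivAt
  have hΓ2 : HasDerivAt (fun s => Real.Gamma (s + b)) (deriv Real.Gamma (x + b)) x := by
    have := (Real.differentiableAt_Gamma (hne (x + b) (by linarith))).hasDerivAt
    have h2 := this.comp x ((hasDerivAt_id x).add_const b)
    rw [mul_one] at h2
    exact h2
  have hne2 : Real.Gamma (x + b) ≠ 0 := (Real.Gamma_pos_of_pos (by linarith)).ne'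
  have hnex : Real.Gamma x ≠ 0 := (Real.Gamma_pos_of_pos hx).ne'
  have h : HasDerivAt (fun s => Real.Gamma s * Real.Gamma b / Real.Gamma (s + b)) _ x :=
    (hΓ.mul_const (Real.Gamma b)).div hΓ2 hne2
  convert h using 1
  simp only [digamma]
  field_simp

lemma hasDerivAt_betaIntegral {a b : ℝ} (ha : 0 < a) (hb : 0 < b) :
    HasDerivAt (fun x => ∫ t in Ioo (0:ℝ) 1, t ^ (x - 1) * (1 - t) ^ (b - 1))
      (∫ t in Ioo (0:ℝ) 1, t ^ (a - 1) * (1 - t) ^ (b - 1) * Real.log t) a := by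
  set μ := volume.restrict (Ioo (0:ℝ) 1) with hμ
  have hmeas : ∀ x : ℝ, AEStronglyMeasurable (fun t : ℝ => t ^ (x - 1) * (1 - t) ^ (b - 1)) μ :=
    fun x => ((measurable_id.pow measurable_const).mul
      ((measurable_const.sub measurable_id).pow measurable_const)).aestronglyMeasurable
  have key := hasDerivAt_integral_of_dominated_loc_of_deriv_le (μ := μ) (x₀ := a)
    (F := fun x t => t ^ (x - 1) * (1 - t) ^ (b - 1))
    (F' := fun x t => t ^ (x - 1) * (1 - t) ^ (b - 1) * Real.log t)
    (bound := fun t => (2 / a) * (t ^ (a / 4 - 1) * (1 - t) ^ (b - 1)))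
    (s := ball a (a / 4)) (ball_mem_nhds a (by positivity))
    (Filter.Eventually.of_forall hmeas)
    (betaIntegrand_integrableOn ha hb)
    (((measurable_id.pow measurable_const).mul
      ((measurable_const.sub measurable_id).pow measurable_const)).mul
      Real.measurable_log).aestronglyMeasurable
    ?_ ?_ ?_
  · exact key.2
  · -- bound
    filter_upwards [ae_restrict_mem measurableSet_Ioo] with t ht x hx
    have ht0 : 0 < t := ht.1
    have ht1 : t < 1 := ht.2
    have h1t : (0:ℝ) ≤ 1 - t := by linarith
    have hxlb : 3 * a / 4 ≤ x := by
      have := abs_lt.mp (mem_ball_iff_norm.mp hx)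
      linarith [this.1]
    have hlog : -Real.log t ≤ (2 / a) * t ^ (-(a / 2)) := by
      have h1 : -Real.log t = (2 / a) * Real.log (t ^ (-(a/2))) := by
        rw [Real.log_rpow ht0]; field_simp
      rw [h1]
      have := Real.log_le_self (Real.rpow_nonneg ht0.le (-(a/2)))
      have h2a : (0:ℝ) ≤ 2 / a := by positivity
      nlinarith [this]
    have hrp : t ^ (x - 1) ≤ t ^ (3 * a / 4 - 1) :=
      Real.rpow_le_rpow_of_exponent_ge ht0 ht1.le (by linarith)
    have hnorm : ‖t ^ (x - 1) * (1 - t) ^ (b - 1) * Real.log t‖ =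
        t ^ (x - 1) * (1 - t) ^ (b - 1) * (-Real.log t) := by
      rw [Real.norm_eq_abs, abs_mul, abs_mul, abs_of_nonneg (Real.rpow_nonneg ht0.le _),
        abs_of_nonneg (Real.rpow_nonneg h1t _), abs_of_nonpos (Real.log_nonpos ht0.le ht1.le)]
    rw [hnorm]
    have hA : 0 ≤ t ^ (x - 1) := Real.rpow_nonneg ht0.le _
    have hB : 0 ≤ (1 - t) ^ (b - 1) := Real.rpow_nonneg h1t _
    have hL : 0 ≤ -Real.log t := neg_nonneg.mpr (Real.log_nonpos ht0.le ht1.le)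
    calc t ^ (x - 1) * (1 - t) ^ (b - 1) * (-Real.log t)
        ≤ t ^ (3 * a / 4 - 1) * (1 - t) ^ (b - 1) * ((2 / a) * t ^ (-(a / 2))) := by
          apply mul_le_mul (mul_le_mul_of_nonneg_right hrp hB) hlog hL
          positivity
      _ = (2 / a) * (t ^ (3 * a / 4 - 1) * t ^ (-(a / 2)) * (1 - t) ^ (b - 1)) := by ring
      _ = (2 / a) * (t ^ (a / 4 - 1) * (1 - t) ^ (b - 1)) := by
          rw [← Real.rpow_add ht0]; ring_nf
  · exact (betaIntegrand_integrableOn (by positivity : (0:ℝ) < a / 4) hb).const_mul _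
  · -- differentiability
    filter_upwards [ae_restrict_mem measurableSet_Ioo] with t ht x _
    have hd : HasDerivAt (fun y : ℝ => t ^ y) (t ^ (x - 1) * Real.log t) (x - 1) :=
      (Real.hasStrictDerivAt_const_rpow ht.1 (x - 1)).hasDerivAt
    have hd2 : HasDerivAt (fun y : ℝ => t ^ (y - 1)) (t ^ (x - 1) * Real.log t) x := by
      have h3 := hd.comp x ((hasDerivAt_id x).sub_const 1)
      rw [mul_one] at h3
      exact h3
    have := hd2.mul_const ((1 - t) ^ (b - 1))
    rw [show t ^ (x - 1) * Real.log t * (1 - t) ^ (b - 1) = t ^ (x - 1) * (1 - t) ^ (b - 1) * Real.log t by ring] at this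
    exact this

/-- Lemma 3: `∫₀¹ t^(a-1) (1-t)^(b-1) log t dt = (Γ(a)Γ(b)/Γ(a+b)) (ψ(a) - ψ(a+b))`. -/
theorem integral_beta_log (a b : ℝ) (ha : 0 < a) (hb : 0 < b) :
    (∫ t in (0:ℝ)..1, t ^ (a - 1) * (1 - t) ^ (b - 1) * Real.log t) =
      (Real.Gamma a * Real.Gamma b / Real.Gamma (a + b)) * (digamma a - digamma (a + b)) := by
  have h1 := hasDerivAt_betaIntegral ha hb
  have hIoo : ∀ x : ℝ, 0 < x →
      (∫ t in Ioo (0:ℝ) 1, t ^ (x - 1) * (1 - t) ^ (b - 1)) =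
        Real.Gamma x * Real.Gamma b / Real.Gamma (x + b) := by
    intro x hx
    rw [← betaIntegral_real hx hb, intervalIntegral.integral_of_le zero_le_one,
      MeasureTheory.integral_Ioc_eq_integral_Ioo]
  have hev : (fun x => ∫ t in Ioo (0:ℝ) 1, t ^ (x - 1) * (1 - t) ^ (b - 1)) =ᶠ[nhds a]
      (fun x => Real.Gamma x * Real.Gamma b / Real.Gamma (x + b)) := by
    filter_upwards [eventually_gt_nhds ha] with x hx using hIoo x hx
  have h2 : HasDerivAt (fun x => Real.Gamma x * Real.Gamma b / Real.Gamma (x + b))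
      (∫ t in Ioo (0:ℝ) 1, t ^ (a - 1) * (1 - t) ^ (b - 1) * Real.log t) a :=
    h1.congr_of_eventuallyEq hev.symm
  have h3 := hasDerivAt_gammaQuot hb ha
  have h4 := h2.unique h3
  rw [intervalIntegral.integral_of_le zero_le_one, MeasureTheory.integral_Ioc_eq_integral_Ioo]
  exact h4
end

section
/- Let α, ν, t be real numbers with α > 0, ν > 0 and t > 0. Then (1/Γ(α)) · ∫₀ᵗ (t - τ)^(α-1) · τ^(ν-1) · log τ dτ = (t^(α+ν-1) · Γ(ν) / Γ(α+ν)) · (log t + ψ(ν) - ψ(α+ν)), where ψ denotes the digamma function. (This is the Riemann–Liouville fractional integral of order α, with lower terminal 0, of t^(ν-1) log t.) -/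
open MeasureTheory intervalIntegral Set
open scoped Interval

lemma betaInt {p q : ℝ} (hp : 0 < p) (hq : 0 < q) :
    IntervalIntegrable (fun s : ℝ => s ^ (p-1) * (1-s) ^ (q-1)) volume 0 1 := by
  have h := (Complex.betaIntegral_convergent (u := (p:ℂ)) (v := (q:ℂ))
    (by simpa using hp) (by simpa using hq)).norm
  rw [intervalIntegrable_iff] at h ⊢
  refine h.congr ?_
  have hne : ∀ᵐ x : ℝ ∂(volume.restrict (Ι (0:ℝ) 1)), x ≠ 1 :=
    ae_restrict_of_ae (by rw [ae_iff]; simp)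
  filter_upwards [hne, ae_restrict_mem measurableSet_uIoc] with x hx1 hx
  rw [Set.uIoc_of_le (by norm_num : (0:ℝ) ≤ 1)] at hx
  have h0 : 0 < x := hx.1
  have h1 : 0 < 1 - x := by cases' lt_or_eq_of_le hx.2 with h h; · linarith
                            · exact absurd h hx1
  rw [norm_mul,
    show ((p:ℂ) - 1) = ((p-1 : ℝ):ℂ) by push_cast; ring,
    show ((1:ℂ) - (x:ℂ)) = ((1-x:ℝ):ℂ) by push_cast; ring,
    show ((q:ℂ) - 1) = ((q-1 : ℝ):ℂ) by push_cast; ring,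
    Complex.norm_cpow_eq_rpow_re_of_pos h0, Complex.norm_cpow_eq_rpow_re_of_pos h1]
  norm_num

lemma betaEval {p q : ℝ} (hp : 0 < p) (hq : 0 < q) :
    ∫ s in (0:ℝ)..1, s ^ (p-1) * (1-s) ^ (q-1)
      = Real.Gamma p * Real.Gamma q / Real.Gamma (p+q) := by
  have key : Complex.betaIntegral p q
      = ((∫ s in (0:ℝ)..1, s ^ (p-1) * (1-s) ^ (q-1) : ℝ) : ℂ) := by
    rw [Complex.betaIntegral, ← intervalIntegral.integral_ofReal]
    refine intervalIntegral.integral_congr fun x hx => ?_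
    rw [Set.uIcc_of_le (by norm_num : (0:ℝ) ≤ 1)] at hx
    push_cast
    rw [Complex.ofReal_cpow hx.1, Complex.ofReal_cpow (by linarith [hx.2])]
    push_cast
    ring
  have h := Complex.Gamma_mul_Gamma_eq_betaIntegral
    (s := (p:ℂ)) (t := (q:ℂ)) (by simpa using hp) (by simpa using hq)
  rw [key] at h
  have hG : (0:ℝ) < Real.Gamma (p+q) := Real.Gamma_pos_of_pos (by linarith)
  have h2 : Real.Gamma p * Real.Gamma q
      = Real.Gamma (p+q) * ∫ s in (0:ℝ)..1, s ^ (p-1) * (1-s) ^ (q-1) := by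
    have := h
    rw [← Complex.ofReal_add, Complex.Gamma_ofReal, Complex.Gamma_ofReal,
      Complex.Gamma_ofReal, ← Complex.ofReal_mul, ← Complex.ofReal_mul] at this
    exact_mod_cast this
  field_simp [hG.ne']
  linarith [h2]

lemma logInt {α ν : ℝ} (hα : 0 < α) (hν : 0 < ν) :
    IntervalIntegrable (fun s : ℝ => s ^ (ν-1) * Real.log s * (1-s) ^ (α-1)) volume 0 1 ∧
    HasDerivAt (fun x : ℝ => ∫ s in (0:ℝ)..1, s ^ (x-1) * (1-s) ^ (α-1))
      (∫ s in (0:ℝ)..1, s ^ (ν-1) * Real.log s * (1-s) ^ (α-1)) ν := by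
  have hmeas : ∀ x : ℝ, AEStronglyMeasurable (fun s : ℝ => s ^ (x-1) * (1-s) ^ (α-1))
      (volume.restrict (Ι (0:ℝ) 1)) :=
    fun x => (Measurable.aestronglyMeasurable (by fun_prop))
  have hmeas' : AEStronglyMeasurable (fun s : ℝ => s ^ (ν-1) * Real.log s * (1-s) ^ (α-1))
      (volume.restrict (Ι (0:ℝ) 1)) :=
    Measurable.aestronglyMeasurable
      (((by fun_prop : Measurable fun s : ℝ => s ^ (ν-1)).mul Real.measurable_log).mul
        (by fun_prop : Measurable fun s : ℝ => (1-s) ^ (α-1)))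
  have H := intervalIntegral.hasDerivAt_integral_of_dominated_loc_of_deriv_le
    (μ := volume) (a := 0) (b := 1) (𝕜 := ℝ)
    (F := fun x s => s ^ (x-1) * (1-s) ^ (α-1))
    (F' := fun x s => s ^ (x-1) * Real.log s * (1-s) ^ (α-1))
    (x₀ := ν) (s := Metric.ball ν (ν/2))
    (bound := fun s => 4/ν * (s ^ (ν/4-1) * (1-s) ^ (α-1)))
    (Metric.ball_mem_nhds ν (by linarith))
    (Filter.Eventually.of_forall hmeas)
    (betaInt hν hα)
    hmeas'
    ?_ (((betaInt (by linarith : (0:ℝ) < ν/4) hα).const_mul (4/ν))) ?_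
  · exact ⟨H.1, H.2⟩
  · refine Filter.Eventually.of_forall fun s hs x hx => ?_
    rw [Set.uIoc_of_le (by norm_num : (0:ℝ) ≤ 1)] at hs
    have hs0 : 0 < s := hs.1
    have hs1 : s ≤ 1 := hs.2
    have h1s : (0:ℝ) ≤ 1 - s := by linarith
    have hxlb : ν/2 - 1 ≤ x - 1 := by
      have := abs_lt.1 (by simpa [Real.dist_eq] using Metric.mem_ball.1 hx)
      linarith [this.1]
    have e1 : s ^ (x-1) ≤ s ^ (ν/2-1) := Real.rpow_le_rpow_of_exponent_ge hs0 hs1 hxlb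
    have e2 : s ^ (ν/4 : ℝ) * |Real.log s| ≤ 4/ν := by
      have h := (Real.abs_log_mul_self_rpow_lt s (ν/4) hs0 hs1 (by linarith)).le
      rw [abs_mul, abs_of_nonneg (Real.rpow_nonneg hs0.le _)] at h
      calc s ^ (ν/4:ℝ) * |Real.log s| = |Real.log s| * s ^ (ν/4:ℝ) := by ring
        _ ≤ 1/(ν/4) := h
        _ = 4/ν := one_div_div ν 4 ▸ by norm_num
    have hlog : 0 ≤ |Real.log s| := abs_nonneg _
    have h1sp : (0:ℝ) ≤ (1-s) ^ (α-1) := Real.rpow_nonneg h1s _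
    have e3 : s ^ (ν/2-1) = s ^ (ν/4-1 : ℝ) * s ^ (ν/4 : ℝ) := by
      rw [← Real.rpow_add hs0]; ring_nf
    calc ‖s ^ (x-1) * Real.log s * (1-s) ^ (α-1)‖
        = s ^ (x-1) * |Real.log s| * (1-s) ^ (α-1) := by
          rw [norm_mul, norm_mul, Real.norm_eq_abs, Real.norm_eq_abs, Real.norm_eq_abs,
            abs_of_nonneg (Real.rpow_nonneg hs0.le _), abs_of_nonneg h1sp]
      _ ≤ s ^ (ν/2-1) * |Real.log s| * (1-s) ^ (α-1) := by
          gcongr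
      _ = s ^ (ν/4-1 : ℝ) * (s ^ (ν/4 : ℝ) * |Real.log s|) * (1-s) ^ (α-1) := by
          rw [e3]; ring
      _ ≤ s ^ (ν/4-1 : ℝ) * (4/ν) * (1-s) ^ (α-1) := by
          gcongr
      _ = 4/ν * (s ^ (ν/4-1) * (1-s) ^ (α-1)) := by ring
  · refine Filter.Eventually.of_forall fun s hs x _ => ?_
    rw [Set.uIoc_of_le (by norm_num : (0:ℝ) ≤ 1)] at hs
    have hd : HasDerivAt (fun y : ℝ => s ^ (y-1)) (s ^ (x-1) * Real.log s) x := by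
      have h1 := (Real.hasStrictDerivAt_const_rpow hs.1 (x-1)).hasDerivAt
      have h2 := h1.comp x ((hasDerivAt_id x).sub_const 1)
      simpa [Function.comp_def] using h2
    exact hd.mul_const _


lemma gamma_ne_neg_nat {x : ℝ} (hx : 0 < x) : ∀ m : ℕ, x ≠ -m := by
  intro m h
  have : (0:ℝ) ≤ m := Nat.cast_nonneg m
  rw [h] at hx; linarith

lemma logVal {α ν : ℝ} (hα : 0 < α) (hν : 0 < ν) :
    (∫ s in (0:ℝ)..1, s ^ (ν-1) * Real.log s * (1-s) ^ (α-1))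
      = Real.Gamma ν * Real.Gamma α / Real.Gamma (ν+α) * (digamma ν - digamma (ν+α)) := by
  have hI := (logInt hα hν).2
  have hEq : (fun x : ℝ => Real.Gamma x * Real.Gamma α / Real.Gamma (x+α))
      =ᶠ[nhds ν] (fun x : ℝ => ∫ s in (0:ℝ)..1, s ^ (x-1) * (1-s) ^ (α-1)) := by
    filter_upwards [isOpen_Ioi.mem_nhds hν] with x hx
    exact (betaEval hx hα).symm
  have hG := hI.congr_of_eventuallyEq hEq
  have hpos : 0 < Real.Gamma (ν+α) := Real.Gamma_pos_of_pos (by linarith)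
  have hΓν := (Real.differentiableAt_Gamma (gamma_ne_neg_nat hν)).hasDerivAt
  have hcomp : HasDerivAt (fun x : ℝ => Real.Gamma (x+α)) (deriv Real.Gamma (ν+α)) ν := by
    have h := (Real.differentiableAt_Gamma (gamma_ne_neg_nat (by linarith : (0:ℝ) < ν+α))).hasDerivAt
    have h2 := h.comp ν ((hasDerivAt_id ν).add_const α)
    simpa [Function.comp_def] using h2
  have hG2 := (hΓν.mul_const (Real.Gamma α)).div hcomp hpos.ne'
  have hval := hG.unique hG2
  rw [hval, digamma, digamma]
  have hν' : Real.Gamma ν ≠ 0 := (Real.Gamma_pos_of_pos hν).ne'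
  field_simp

/-- Theorem 4: Riemann–Liouville fractional integral of order `α` (lower terminal 0)
of `t^(ν-1) log t`. -/
theorem rl_fracInt_rpow_log (α ν t : ℝ) (hα : 0 < α) (hν : 0 < ν) (ht : 0 < t) :
    (1 / Real.Gamma α) * (∫ τ in (0:ℝ)..t, (t - τ) ^ (α - 1) * (τ ^ (ν - 1) * Real.log τ)) =
      (t ^ (α + ν - 1) * Real.Gamma ν / Real.Gamma (α + ν)) *
        (Real.log t + digamma ν - digamma (α + ν)) := by
  set c1 : ℝ := t ^ (α-1) * t ^ (ν-1) * Real.log t with hc1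
  set c2 : ℝ := t ^ (α-1) * t ^ (ν-1) with hc2
  have step1 : (∫ τ in (0:ℝ)..t, (t - τ) ^ (α - 1) * (τ ^ (ν - 1) * Real.log τ))
      = t • ∫ s in (0:ℝ)..1,
          (t - t*s) ^ (α - 1) * ((t*s) ^ (ν - 1) * Real.log (t*s)) := by
    have h := intervalIntegral.smul_integral_comp_mul_left
      (f := fun τ : ℝ => (t - τ) ^ (α - 1) * (τ ^ (ν - 1) * Real.log τ)) (a := 0) (b := 1) t
    simpa using h.symm
  have step2 : (∫ s in (0:ℝ)..1, (t - t*s) ^ (α - 1) * ((t*s) ^ (ν - 1) * Real.log (t*s)))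
      = ∫ s in (0:ℝ)..1,
          (c1 * (s ^ (ν-1) * (1-s) ^ (α-1)) + c2 * (s ^ (ν-1) * Real.log s * (1-s) ^ (α-1))) := by
    refine intervalIntegral.integral_congr_ae ?_
    refine Filter.Eventually.of_forall fun s hs => ?_
    rw [Set.uIoc_of_le (by norm_num : (0:ℝ) ≤ 1)] at hs
    have hs0 : 0 < s := hs.1
    have hs1 : s ≤ 1 := hs.2
    rw [show t - t*s = t*(1-s) by ring, Real.mul_rpow ht.le (by linarith),
      Real.mul_rpow ht.le hs0.le, Real.log_mul ht.ne' hs0.ne']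
    simp only [hc1, hc2]
    ring
  have step3 : (∫ s in (0:ℝ)..1,
          (c1 * (s ^ (ν-1) * (1-s) ^ (α-1)) + c2 * (s ^ (ν-1) * Real.log s * (1-s) ^ (α-1))))
      = c1 * (∫ s in (0:ℝ)..1, s ^ (ν-1) * (1-s) ^ (α-1))
        + c2 * (∫ s in (0:ℝ)..1, s ^ (ν-1) * Real.log s * (1-s) ^ (α-1)) := by
    rw [intervalIntegral.integral_add ((betaInt hν hα).const_mul c1)
      (((logInt hα hν).1).const_mul c2), intervalIntegral.integral_const_mul,
      intervalIntegral.integral_const_mul]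
  rw [step1, step2, step3, betaEval hν hα, logVal hα hν]
  have hpow2 : t ^ (α+ν-1) = t * c2 := by
    rw [hc2, show α+ν-1 = 1 + (α-1) + (ν-1) by ring, Real.rpow_add ht, Real.rpow_add ht,
      Real.rpow_one]
    ring
  have hΓα : Real.Gamma α ≠ 0 := (Real.Gamma_pos_of_pos hα).ne'
  have hΓ : Real.Gamma (ν+α) ≠ 0 := (Real.Gamma_pos_of_pos (by linarith)).ne'
  rw [show ν + α = α + ν by ring] at *
  rw [hc1, hpow2, smul_eq_mul]
  field_simp
  ring
end

section
/- Let m be a positive natural number and α, γ, t real numbers with m - 1 < α < m, γ > -1 and t > 0. Then the Riemann–Liouville fractional derivative of order α (with lower terminal 0) of the power function satisfies: the m-th iterated derivative at t of the function s ↦ (1/Γ(m-α)) · ∫₀^s (s - τ)^(m-α-1) · τ^γ dτ equals (Γ(1+γ)/Γ(1+γ-α)) · t^(γ-α). -/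
open Real Finset

/-- Real Beta integral, scaled. -/
lemma beta_rpow_integral {β γ a : ℝ} (hβ : 0 < β) (hγ : -1 < γ) (ha : 0 < a) :
    ∫ τ in (0:ℝ)..a, (a - τ) ^ (β - 1) * τ ^ γ =
      Real.Gamma (γ + 1) * Real.Gamma β / Real.Gamma (γ + 1 + β) * a ^ (β + γ) := by
  have hs : 0 < ((γ : ℂ) + 1).re := by simp; linarith
  have htt : 0 < ((β : ℂ)).re := by simpa using hβ
  have hkey := Complex.betaIntegral_scaled ((γ : ℂ) + 1) (β : ℂ) ha
  have hgam := Complex.Gamma_mul_Gamma_eq_betaIntegral hs htt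
  have hGne : Complex.Gamma ((γ : ℂ) + 1 + β) ≠ 0 := by
    apply Complex.Gamma_ne_zero_of_re_pos
    simp; linarith
  have hbeta : Complex.betaIntegral ((γ : ℂ) + 1) (β : ℂ)
      = Complex.Gamma ((γ : ℂ) + 1) * Complex.Gamma (β : ℂ) / Complex.Gamma ((γ : ℂ) + 1 + β) := by
    field_simp
    rw [hgam]; ring
  have hcoe : (↑(∫ τ in (0:ℝ)..a, (a - τ) ^ (β - 1) * τ ^ γ) : ℂ)
      = ∫ τ in (0:ℝ)..a, ((τ : ℂ) ^ ((γ : ℂ) + 1 - 1) * ((a : ℂ) - τ) ^ ((β : ℂ) - 1)) := by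
    rw [← intervalIntegral.integral_ofReal]
    refine intervalIntegral.integral_congr fun x hx => ?_
    rw [Set.uIcc_of_le ha.le] at hx
    push_cast
    rw [Complex.ofReal_cpow (by linarith [hx.2]) (β - 1), Complex.ofReal_cpow hx.1 γ]
    push_cast
    rw [add_sub_cancel_right]
    ring
  have : (↑(∫ τ in (0:ℝ)..a, (a - τ) ^ (β - 1) * τ ^ γ) : ℂ)
      = (↑(Real.Gamma (γ + 1) * Real.Gamma β / Real.Gamma (γ + 1 + β) * a ^ (β + γ)) : ℂ) := by
    rw [hcoe, hkey, hbeta]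
    rw [show ((γ : ℂ) + 1 + β - 1) = ((β + γ : ℝ) : ℂ) by push_cast; ring,
      ← Complex.ofReal_cpow ha.le]
    rw [show ((γ : ℂ) + 1) = ((γ + 1 : ℝ) : ℂ) by push_cast; ring,
      show ((γ + 1 : ℝ) : ℂ) + (β : ℂ) = ((γ + 1 + β : ℝ) : ℂ) by push_cast; ring]
    rw [Complex.Gamma_ofReal, Complex.Gamma_ofReal, Complex.Gamma_ofReal]
    push_cast
    ring
  exact_mod_cast this

/-- Iterated derivative of `c * s ^ p` at a positive point. -/
lemma iter_deriv_const_mul_rpow : ∀ (n : ℕ) (c p t : ℝ), 0 < t →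
    iteratedDeriv n (fun s : ℝ => c * s ^ p) t
      = c * (∏ i ∈ Finset.range n, (p - i)) * t ^ (p - n) := by
  intro n
  induction n with
  | zero => intro c p t ht; simp
  | succ n ih =>
    intro c p t ht
    rw [iteratedDeriv_succ']
    have hev : deriv (fun s : ℝ => c * s ^ p) =ᶠ[nhds t]
        fun s : ℝ => (c * p) * s ^ (p - 1) := by
      filter_upwards [Ioi_mem_nhds ht] with s hs
      have := ((Real.hasDerivAt_rpow_const (p := p) (Or.inl (ne_of_gt hs))).const_mul c).deriv
      rw [this]; ring
    rw [Filter.EventuallyEq.iteratedDeriv_eq n hev, ih (c * p) (p - 1) t ht]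
    have hprod : (∏ i ∈ Finset.range (n + 1), (p - i))
        = (∏ i ∈ Finset.range n, (p - 1 - i)) * p := by
      rw [Finset.prod_range_succ']
      congr 1
      · refine Finset.prod_congr rfl fun i _ => ?_
        push_cast; ring
      · simp
    rw [hprod]
    rw [show p - (↑(n + 1) : ℝ) = p - 1 - n by push_cast; ring]
    ring

lemma gamma_prod (x : ℝ) : ∀ n : ℕ, (∀ j : ℕ, j < n → x + j ≠ 0) →
    Real.Gamma (x + n) = Real.Gamma x * ∏ j ∈ Finset.range n, (x + j) := by
  intro n
  induction n with
  | zero => intro _; simp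
  | succ n ih =>
    intro h
    have h1 : x + n ≠ 0 := h n (Nat.lt_succ_self n)
    have : x + (↑(n + 1) : ℝ) = (x + n) + 1 := by push_cast; ring
    rw [this, Real.Gamma_add_one h1, ih (fun j hj => h j (hj.trans (Nat.lt_succ_self n))),
      Finset.prod_range_succ]
    ring
/-- Theorem 5: Riemann–Liouville fractional derivative of order `α`
(with `m - 1 < α < m`, lower terminal 0) of the power function `t^γ`. -/
theorem rl_fracDeriv_rpow (m : ℕ) (hm : 0 < m) (α γ t : ℝ)
    (h1 : (m : ℝ) - 1 < α) (h2 : α < m) (hγ : -1 < γ) (ht : 0 < t) :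
    iteratedDeriv m
        (fun s : ℝ => (1 / Real.Gamma (m - α)) *
          ∫ τ in (0:ℝ)..s, (s - τ) ^ ((m : ℝ) - α - 1) * τ ^ γ) t =
      (Real.Gamma (1 + γ) / Real.Gamma (1 + γ - α)) * t ^ (γ - α) := by
  have hβ : 0 < (m : ℝ) - α := sub_pos.2 h2
  have hp1 : 0 < ((m : ℝ) - α) + γ + 1 := by linarith
  have hΓβ : Real.Gamma ((m : ℝ) - α) ≠ 0 := (Real.Gamma_pos_of_pos hβ).ne'
  have hev : (fun s : ℝ => (1 / Real.Gamma ((m : ℝ) - α)) *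
          ∫ τ in (0:ℝ)..s, (s - τ) ^ ((m : ℝ) - α - 1) * τ ^ γ)
      =ᶠ[nhds t] fun s : ℝ =>
        (Real.Gamma (γ + 1) / Real.Gamma (((m : ℝ) - α) + γ + 1)) * s ^ (((m : ℝ) - α) + γ) := by
    filter_upwards [Ioi_mem_nhds ht] with s hs
    rw [beta_rpow_integral hβ hγ hs, show γ + 1 + ((m : ℝ) - α) = ((m : ℝ) - α) + γ + 1 by ring]
    field_simp
  rw [Filter.EventuallyEq.iteratedDeriv_eq m hev, iter_deriv_const_mul_rpow m _ _ t ht]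
  rw [show ((m : ℝ) - α) + γ - (m : ℝ) = γ - α by ring]
  have hxm : (1 + γ - α) + (m : ℝ) = ((m : ℝ) - α) + γ + 1 := by ring
  have hprodeq : (∏ i ∈ Finset.range m, (((m : ℝ) - α) + γ - i))
      = ∏ j ∈ Finset.range m, ((1 + γ - α) + j) := by
    rw [← Finset.prod_range_reflect (fun j : ℕ => (1 + γ - α) + j) m]
    refine Finset.prod_congr rfl fun i hi => ?_
    have hi' : i ≤ m - 1 := Nat.le_sub_one_of_lt (Finset.mem_range.1 hi)
    have hc : ((m - 1 - i : ℕ) : ℝ) = (m : ℝ) - 1 - i := by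
      rw [Nat.cast_sub hi', Nat.cast_sub hm]
      push_cast; ring
    simp only [hc]
    ring
  rw [hprodeq]
  by_cases hz : ∀ j : ℕ, j < m → (1 + γ - α) + j ≠ 0
  · have hg := gamma_prod (1 + γ - α) m hz
    rw [hxm] at hg
    have hΓx : Real.Gamma (1 + γ - α) ≠ 0 := by
      intro h0
      obtain ⟨k, hk⟩ := (Real.Gamma_eq_zero_iff _).1 h0
      rcases lt_or_ge k m with hkm | hkm
      · exact hz k hkm (by rw [hk]; ring)
      · have hkm' : (m : ℝ) ≤ (k : ℝ) := Nat.cast_le.2 hkm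
        have : (1 + γ - α) + (m : ℝ) ≤ 0 := by rw [hk]; linarith
        rw [hxm] at this; linarith
    have hΓp : Real.Gamma (((m : ℝ) - α) + γ + 1) ≠ 0 := (Real.Gamma_pos_of_pos hp1).ne'
    have hprod_ne : (∏ j ∈ Finset.range m, ((1 + γ - α) + (j : ℝ))) ≠ 0 :=
      Finset.prod_ne_zero_iff.2 fun j hj => hz j (Finset.mem_range.1 hj)
    rw [show (1 : ℝ) + γ = γ + 1 by ring, hg]
    field_simp
    rw [show γ + 1 - α = 1 + γ - α by ring, mul_right_comm,
      mul_div_cancel_right₀ _ hΓx]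
  · push_neg at hz
    obtain ⟨j, hjm, hj⟩ := hz
    rw [Finset.prod_eq_zero (Finset.mem_range.2 hjm) hj]
    have hx0 : Real.Gamma (1 + γ - α) = 0 :=
      (Real.Gamma_eq_zero_iff _).2 ⟨j, by linarith⟩
    rw [hx0, div_zero, zero_mul, mul_zero, zero_mul]
end

section
/- Let m be a positive natural number and α, δ, t real numbers with m - 1 < α < m, m - α < δ < 1 and t > 0. Then the Weyl fractional derivative of order α of |t|^(-δ) satisfies: the m-th iterated derivative at t of the function s ↦ (1/Γ(m-α)) · ∫_{τ ∈ (-∞, s]} (s - τ)^(m-α-1) · |τ|^(-δ) dτ equals (Γ(δ+α)/Γ(δ)) · (cos(πδ/2 + πα) / cos(πδ/2)) · t^(-α-δ). -/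
open MeasureTheory Set Filter

/-! Auxiliary lemmas for the Weyl fractional derivative computation. -/

lemma weylAux_integral_comp_add_right_Ioi (g : ℝ → ℝ) (a b : ℝ) :
    ∫ x in Ioi a, g (x + b) = ∫ x in Ioi (a + b), g x := by
  rw [← integral_indicator measurableSet_Ioi, ← integral_indicator measurableSet_Ioi,
    ← integral_add_right_eq_self (fun x => (Ioi (a + b)).indicator g x) b]
  congr 1
  ext x
  by_cases h : a < x
  · rw [indicator_of_mem (by exact h) (fun x => g (x + b)),
      indicator_of_mem (by exact (add_lt_add_iff_right b).mpr h) g]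
  · rw [indicator_of_notMem (by exact h) (fun x => g (x + b)),
      indicator_of_notMem (by exact fun hc => h (lt_of_add_lt_add_right hc)) g]

lemma weylAux_cast {a b x : ℝ} (hx0 : 0 ≤ x) (hx1 : 0 ≤ 1 - x) :
    (x:ℂ) ^ ((a:ℂ) - 1) * ((1:ℂ) - x) ^ ((b:ℂ) - 1)
      = ((x ^ (a - 1) * (1 - x) ^ (b - 1) : ℝ) : ℂ) := by
  rw [show ((a:ℂ) - 1) = ((a - 1 : ℝ) : ℂ) by push_cast; ring,
    show ((b:ℂ) - 1) = ((b - 1 : ℝ) : ℂ) by push_cast; ring,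
    show ((1:ℂ) - x) = ((1 - x : ℝ) : ℂ) by push_cast; ring,
    ← Complex.ofReal_cpow hx0, ← Complex.ofReal_cpow hx1, ← Complex.ofReal_mul]

/-- The real Beta integral in terms of the Gamma function. -/
lemma weylAux_betaIntegral_eval {a b : ℝ} (ha : 0 < a) (hb : 0 < b) :
    ∫ x in Ioc (0:ℝ) 1, x ^ (a - 1) * (1 - x) ^ (b - 1)
      = Real.Gamma a * Real.Gamma b / Real.Gamma (a + b) := by
  have key := Complex.Gamma_mul_Gamma_eq_betaIntegral
      (s := (a : ℂ)) (t := (b : ℂ)) (by simpa using ha) (by simpa using hb)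
  have hbeta : Complex.betaIntegral (a : ℂ) (b : ℂ)
      = ((∫ x in Ioc (0:ℝ) 1, x ^ (a - 1) * (1 - x) ^ (b - 1) : ℝ) : ℂ) := by
    rw [Complex.betaIntegral]
    rw [show (∫ x in Ioc (0:ℝ) 1, x ^ (a - 1) * (1 - x) ^ (b - 1) : ℝ)
        = ∫ x in (0:ℝ)..1, x ^ (a - 1) * (1 - x) ^ (b - 1) by
      rw [intervalIntegral.integral_of_le zero_le_one]]
    rw [← intervalIntegral.integral_ofReal]
    apply intervalIntegral.integral_congr
    intro x hx
    rw [uIcc_of_le zero_le_one] at hx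
    have hx0 : (0:ℝ) ≤ x := hx.1
    have hx1 : (0:ℝ) ≤ 1 - x := by linarith [hx.2]
    exact weylAux_cast hx0 hx1
  rw [hbeta, Complex.Gamma_ofReal, Complex.Gamma_ofReal, ← Complex.ofReal_mul,
    show ((a:ℂ) + b) = ((a + b : ℝ) : ℂ) by push_cast; ring, Complex.Gamma_ofReal,
    ← Complex.ofReal_mul] at key
  have := Complex.ofReal_inj.mp key
  have hab : Real.Gamma (a + b) ≠ 0 := (Real.Gamma_pos_of_pos (by linarith)).ne'
  field_simp
  linarith [this]

lemma weylAux_betaIntegrable {a b : ℝ} (ha : 0 < a) (hb : 0 < b) :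
    IntegrableOn (fun x : ℝ => x ^ (a - 1) * (1 - x) ^ (b - 1)) (Ioc 0 1) := by
  have h := (Complex.betaIntegral_convergent (u := (a : ℂ)) (v := (b : ℂ))
      (by simpa using ha) (by simpa using hb)).1
  have h2 : IntegrableOn (fun x : ℝ => Complex.re
      ((x : ℂ) ^ ((a : ℂ) - 1) * ((1 : ℂ) - x) ^ ((b : ℂ) - 1))) (Ioc 0 1) :=
    h.re
  apply h2.congr_fun _ measurableSet_Ioc
  intro x hx
  have hx0 : (0:ℝ) ≤ x := hx.1.le
  have hx1 : (0:ℝ) ≤ 1 - x := by linarith [hx.2]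
  simp only [weylAux_cast hx0 hx1, Complex.ofReal_re]

lemma weylAux_inv_image : (fun x : ℝ => x⁻¹) '' Ioo 0 1 = Ioi 1 := by
  ext y
  simp only [mem_image, mem_Ioo, mem_Ioi]
  constructor
  · rintro ⟨x, ⟨hx0, hx1⟩, rfl⟩
    exact (one_lt_inv₀ hx0).mpr hx1
  · intro hy
    have hy0 : 0 < y := lt_trans one_pos hy
    exact ⟨y⁻¹, ⟨inv_pos.mpr hy0, (inv_lt_one₀ hy0).mpr hy⟩, by simp⟩

/-- Evaluation of the constant `K = ∫_{0}^{∞} u^{β-1} |1-u|^{-δ} du`. -/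
lemma weylAux_K_eval {β δ : ℝ} (hβ0 : 0 < β) (hβδ : β < δ) (hδ1 : δ < 1) :
    ∫ u in Ioi (0:ℝ), u ^ (β - 1) * |1 - u| ^ (-δ)
      = Real.Gamma β * Real.Gamma (1 - δ) / Real.Gamma (β + 1 - δ)
        + Real.Gamma (δ - β) * Real.Gamma (1 - δ) / Real.Gamma (1 - β) := by
  have hb : 0 < 1 - δ := by linarith
  have hdb : 0 < δ - β := by linarith
  set f : ℝ → ℝ := fun u => u ^ (β - 1) * |1 - u| ^ (-δ) with hf
  -- on (0, 1] the integrand is the Beta integrand for (β, 1 - δ)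
  have heq1 : EqOn (fun x : ℝ => x ^ (β - 1) * (1 - x) ^ ((1 - δ) - 1)) f (Ioc 0 1) := by
    intro x hx
    simp only [hf]
    rw [abs_of_nonneg (by linarith [hx.2] : (0:ℝ) ≤ 1 - x),
      show (1 - δ) - 1 = -δ by ring]
  have hint1 : IntegrableOn f (Ioc 0 1) :=
    (weylAux_betaIntegrable hβ0 hb).congr_fun heq1 measurableSet_Ioc
  have hval1 : ∫ u in Ioc (0:ℝ) 1, f u
      = Real.Gamma β * Real.Gamma (1 - δ) / Real.Gamma (β + 1 - δ) := by
    rw [← setIntegral_congr_fun measurableSet_Ioc heq1, weylAux_betaIntegral_eval hβ0 hb,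
      show β + (1 - δ) = β + 1 - δ by ring]
  -- substitution x ↦ x⁻¹ on (0, 1) for the integral over (1, ∞)
  have hderiv : ∀ x ∈ Ioo (0:ℝ) 1,
      HasDerivWithinAt (fun y : ℝ => y⁻¹) (-(x ^ 2)⁻¹) (Ioo 0 1) x :=
    fun x hx => (hasDerivAt_inv (ne_of_gt hx.1)).hasDerivWithinAt
  have hinj : InjOn (fun y : ℝ => y⁻¹) (Ioo 0 1) := fun x _ y _ h => inv_injective h
  have hpt : ∀ x ∈ Ioo (0:ℝ) 1,
      |(-(x ^ 2)⁻¹)| • f x⁻¹ = x ^ ((δ - β) - 1) * (1 - x) ^ ((1 - δ) - 1) := by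
    intro x hx
    have hx0 : 0 < x := hx.1
    have h1x : 0 < 1 - x := by linarith [hx.2]
    have e1 : (x⁻¹) ^ (β - 1) = x ^ (-(β - 1)) := by
      rw [Real.inv_rpow hx0.le, ← Real.rpow_neg hx0.le]
    have e2 : |1 - x⁻¹| = (1 - x) * x⁻¹ := by
      rw [abs_of_neg (by rw [sub_neg]; exact (one_lt_inv₀ hx0).mpr hx.2)]
      field_simp
      ring
    have e3 : ((1 - x) * x⁻¹) ^ (-δ) = (1 - x) ^ (-δ) * x ^ δ := by
      rw [Real.mul_rpow h1x.le (inv_nonneg.mpr hx0.le), Real.inv_rpow hx0.le,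
        ← Real.rpow_neg hx0.le, neg_neg]
    have e5 : (x ^ 2)⁻¹ = x ^ (-2 : ℝ) := by
      rw [← Real.rpow_natCast x 2, ← Real.rpow_neg hx0.le]
      norm_num
    simp only [hf, smul_eq_mul, abs_neg, abs_inv, abs_pow, abs_of_pos hx0]
    rw [e1, e2, e3, e5,
      show x ^ (-2:ℝ) * (x ^ (-(β - 1)) * ((1 - x) ^ (-δ) * x ^ δ))
        = (x ^ (-2:ℝ) * x ^ (-(β - 1)) * x ^ δ) * (1 - x) ^ (-δ) by ring,
      ← Real.rpow_add hx0, ← Real.rpow_add hx0,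
      show (-2:ℝ) + -(β - 1) + δ = (δ - β) - 1 by ring,
      show (1 - δ) - 1 = -δ by ring]
  have hbeta2 : IntegrableOn
      (fun x : ℝ => x ^ ((δ - β) - 1) * (1 - x) ^ ((1 - δ) - 1)) (Ioo 0 1) :=
    (weylAux_betaIntegrable hdb hb).mono_set Ioo_subset_Ioc_self
  have hint2 : IntegrableOn f (Ioi 1) := by
    rw [← weylAux_inv_image,
      integrableOn_image_iff_integrableOn_abs_deriv_smul measurableSet_Ioo hderiv hinj]
    exact (hbeta2.congr_fun (fun x hx => (hpt x hx).symm) measurableSet_Ioo)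
  have hval2 : ∫ u in Ioi (1:ℝ), f u
      = Real.Gamma (δ - β) * Real.Gamma (1 - δ) / Real.Gamma (1 - β) := by
    rw [← weylAux_inv_image,
      integral_image_eq_integral_abs_deriv_smul measurableSet_Ioo hderiv hinj,
      setIntegral_congr_fun measurableSet_Ioo hpt,
      ← integral_Ioc_eq_integral_Ioo, weylAux_betaIntegral_eval hdb hb,
      show (δ - β) + (1 - δ) = 1 - β by ring]
  rw [show Ioi (0:ℝ) = Ioc 0 1 ∪ Ioi 1 from (Ioc_union_Ioi_eq_Ioi zero_le_one).symm,
    setIntegral_union (Ioc_disjoint_Ioi le_rfl) measurableSet_Ioi hint1 hint2,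
    hval1, hval2]

/-- Iterated derivative of `C * x ^ p` at a positive point. -/
lemma weylAux_iteratedDeriv_rpow (C p : ℝ) (m : ℕ) :
    ∀ t : ℝ, 0 < t → iteratedDeriv m (fun s : ℝ => C * s ^ p) t
      = (C * ∏ k ∈ Finset.range m, (p - k)) * t ^ (p - m) := by
  induction m with
  | zero => intro t ht; simp
  | succ n ih =>
    intro t ht
    rw [iteratedDeriv_succ]
    have hev : iteratedDeriv n (fun s : ℝ => C * s ^ p)
        =ᶠ[nhds t] fun s => (C * ∏ k ∈ Finset.range n, (p - k)) * s ^ (p - n) :=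
      eventually_of_mem (Ioi_mem_nhds ht) (fun x hx => ih x hx)
    rw [hev.deriv_eq]
    have hd : HasDerivAt (fun s : ℝ => (C * ∏ k ∈ Finset.range n, (p - k)) * s ^ (p - n))
        ((C * ∏ k ∈ Finset.range n, (p - k)) * ((p - n) * t ^ (p - n - 1))) t :=
      (Real.hasDerivAt_rpow_const (Or.inl ht.ne')).const_mul _
    rw [hd.deriv, Finset.prod_range_succ,
      show p - ((n + 1 : ℕ) : ℝ) = p - n - 1 by push_cast; ring]
    ring

lemma weylAux_Gamma_add_nat (x : ℝ) (hx : 0 < x) (m : ℕ) :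
    Real.Gamma (x + m) = Real.Gamma x * ∏ k ∈ Finset.range m, (x + k) := by
  induction m with
  | zero => simp
  | succ n ih =>
    rw [show x + ((n + 1 : ℕ) : ℝ) = (x + n) + 1 by push_cast; ring,
      Real.Gamma_add_one (by positivity), ih, Finset.prod_range_succ]
    ring

lemma weylAux_scaling {β δ : ℝ} {s : ℝ} (hs : 0 < s) :
    ∫ τ in Iic s, (s - τ) ^ (β - 1) * |τ| ^ (-δ)
      = s ^ (β - δ) * ∫ u in Ioi (0:ℝ), u ^ (β - 1) * |1 - u| ^ (-δ) := by
  have h1 : ∫ τ in Iic s, (s - τ) ^ (β - 1) * |τ| ^ (-δ)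
      = ∫ x in Ioi (-s), (s + x) ^ (β - 1) * |x| ^ (-δ) := by
    rw [← integral_comp_neg_Iic s (fun x => (s + x) ^ (β - 1) * |x| ^ (-δ))]
    refine setIntegral_congr_fun measurableSet_Iic (fun τ _ => ?_)
    rw [abs_neg, ← sub_eq_add_neg]
  have h2 : ∫ x in Ioi (-s), (s + x) ^ (β - 1) * |x| ^ (-δ)
      = ∫ y in Ioi (0:ℝ), y ^ (β - 1) * |y - s| ^ (-δ) := by
    have h := weylAux_integral_comp_add_right_Ioi
      (fun y => y ^ (β - 1) * |y - s| ^ (-δ)) (-s) s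
    rw [neg_add_cancel] at h
    rw [← h]
    refine setIntegral_congr_fun measurableSet_Ioi (fun x _ => ?_)
    simp only [add_sub_cancel_right, add_comm s x]
  have h3 : ∫ y in Ioi (0:ℝ), y ^ (β - 1) * |y - s| ^ (-δ)
      = s * ∫ u in Ioi (0:ℝ), (s * u) ^ (β - 1) * |s * u - s| ^ (-δ) := by
    have h := integral_comp_mul_left_Ioi
      (fun y => y ^ (β - 1) * |y - s| ^ (-δ)) 0 hs
    rw [mul_zero, smul_eq_mul] at h
    rw [h, ← mul_assoc, mul_inv_cancel₀ hs.ne', one_mul]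
  have h4 : ∫ u in Ioi (0:ℝ), (s * u) ^ (β - 1) * |s * u - s| ^ (-δ)
      = (s ^ (β - 1) * s ^ (-δ)) * ∫ u in Ioi (0:ℝ), u ^ (β - 1) * |1 - u| ^ (-δ) := by
    rw [← integral_const_mul]
    refine setIntegral_congr_fun measurableSet_Ioi (fun u hu => ?_)
    have hu0 : (0:ℝ) < u := hu
    rw [Real.mul_rpow hs.le hu0.le,
      show |s * u - s| = s * |1 - u| by
        rw [show s * u - s = s * (u - 1) by ring, abs_mul, abs_of_pos hs, abs_sub_comm],
      Real.mul_rpow hs.le (abs_nonneg _)]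
    ring
  rw [h1, h2, h3, h4, ← mul_assoc,
    show s * (s ^ (β - 1) * s ^ (-δ)) = s ^ (β - δ) by
      nth_rewrite 1 [← Real.rpow_one s]
      rw [← Real.rpow_add hs, ← Real.rpow_add hs,
        show (1:ℝ) + (β - 1 + -δ) = β - δ by ring]]

set_option maxHeartbeats 1000000 in
/-- The constant identity combining Gamma reflection and trigonometric identities. -/
lemma weylAux_const (m : ℕ) {α δ : ℝ} (hβ0 : 0 < (m:ℝ) - α) (hβ1 : (m:ℝ) - α < 1)
    (hβδ : (m:ℝ) - α < δ) (hδ1 : δ < 1) :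
    (1 / Real.Gamma ((m:ℝ) - α) *
        (Real.Gamma ((m:ℝ) - α) * Real.Gamma (1 - δ) / Real.Gamma (((m:ℝ) - α) + 1 - δ)
          + Real.Gamma (δ - ((m:ℝ) - α)) * Real.Gamma (1 - δ) / Real.Gamma (1 - ((m:ℝ) - α)))) *
      ∏ k ∈ Finset.range m, (((m:ℝ) - α) - δ - k)
    = Real.Gamma (δ + α) / Real.Gamma δ *
        (Real.cos (Real.pi * δ / 2 + Real.pi * α) / Real.cos (Real.pi * δ / 2)) := by
  set β := (m:ℝ) - α with hβ
  have hδ0 : 0 < δ := lt_trans hβ0 hβδ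
  have hdb0 : 0 < δ - β := by linarith
  have hdb1 : δ - β < 1 := by linarith
  set π := Real.pi with hπdef
  have hπ : 0 < π := Real.pi_pos
  -- abbreviations
  set a := Real.Gamma β with ha_def
  set d := Real.Gamma (δ - β) with hd_def
  set g := Real.Gamma δ with hg_def
  set G := Real.Gamma (δ + α) with hG_def
  set u := Real.Gamma (1 - δ) with hu_def
  set v := Real.Gamma (1 - β) with hv_def
  set w := Real.Gamma (β + 1 - δ) with hw_def
  have ha : 0 < a := Real.Gamma_pos_of_pos hβ0
  have hd : 0 < d := Real.Gamma_pos_of_pos hdb0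
  have hg : 0 < g := Real.Gamma_pos_of_pos hδ0
  have hu : 0 < u := Real.Gamma_pos_of_pos (by linarith)
  have hv : 0 < v := Real.Gamma_pos_of_pos (by linarith)
  have hw : 0 < w := Real.Gamma_pos_of_pos (by linarith)
  -- sines and cosines
  have hs1 : 0 < Real.sin (π * (δ - β)) :=
    Real.sin_pos_of_pos_of_lt_pi (by positivity) (by nlinarith)
  have hs2 : 0 < Real.sin (π * β) :=
    Real.sin_pos_of_pos_of_lt_pi (by positivity) (by nlinarith)
  have hs3 : 0 < Real.sin (π * δ) :=
    Real.sin_pos_of_pos_of_lt_pi (by positivity) (by nlinarith)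
  have hch : 0 < Real.cos (π * δ / 2) :=
    Real.cos_pos_of_mem_Ioo ⟨by nlinarith, by nlinarith⟩
  have hsh : 0 < Real.sin (π * δ / 2) :=
    Real.sin_pos_of_pos_of_lt_pi (by positivity) (by nlinarith)
  -- reflection formulas
  have R1 : w * d * Real.sin (π * (δ - β)) = π := by
    have h := Real.Gamma_mul_Gamma_one_sub (δ - β)
    rw [show (1:ℝ) - (δ - β) = β + 1 - δ by ring] at h
    rw [← hd_def, ← hw_def] at h
    rw [show w * d * Real.sin (π * (δ - β)) = d * w * Real.sin (π * (δ - β)) by ring, h]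
    exact div_mul_cancel₀ _ hs1.ne'
  have R2 : a * v * Real.sin (π * β) = π := by
    have h := Real.Gamma_mul_Gamma_one_sub β
    rw [← ha_def, ← hv_def] at h
    rw [h]
    exact div_mul_cancel₀ _ hs2.ne'
  have R3 : g * u * Real.sin (π * δ) = π := by
    have h := Real.Gamma_mul_Gamma_one_sub δ
    rw [← hg_def, ← hu_def] at h
    rw [h]
    exact div_mul_cancel₀ _ hs3.ne'
  -- trigonometric identities
  have T1 : Real.sin (π * δ) = 2 * Real.sin (π * δ / 2) * Real.cos (π * δ / 2) := by
    have h := Real.sin_two_mul (π * δ / 2)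
    rw [show 2 * (π * δ / 2) = π * δ by ring] at h
    exact h
  have T2 : Real.sin (π * (δ - β)) + Real.sin (π * β)
      = 2 * Real.sin (π * δ / 2) * Real.cos (π * δ / 2 - π * β) := by
    have h := Real.sin_sub_sin (π * (δ - β)) (-(π * β))
    rw [Real.sin_neg, sub_neg_eq_add,
      show (π * (δ - β) - -(π * β)) / 2 = π * δ / 2 by ring,
      show (π * (δ - β) + -(π * β)) / 2 = π * δ / 2 - π * β by ring] at h
    exact h
  have T3 : Real.cos (π * δ / 2 - π * β) = (-1:ℝ)^m * Real.cos (π * δ / 2 + π * α) := by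
    rw [show π * δ / 2 - π * β = -((m:ℝ) * π - (π * δ / 2 + π * α)) by rw [hβ]; ring,
      Real.cos_neg, Real.cos_nat_mul_pi_sub]
  -- the product of factors
  have P1 : ∏ k ∈ Finset.range m, (β - δ - k)
      = (-1:ℝ)^m * ∏ k ∈ Finset.range m, ((δ - β) + k) := by
    calc ∏ k ∈ Finset.range m, (β - δ - k)
        = ∏ k ∈ Finset.range m, ((-1:ℝ) * ((δ - β) + k)) :=
          Finset.prod_congr rfl (fun k _ => by ring)
      _ = (-1:ℝ)^m * ∏ k ∈ Finset.range m, ((δ - β) + k) := by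
          rw [Finset.prod_mul_distrib, Finset.prod_const, Finset.card_range]
  have P2 : d * ∏ k ∈ Finset.range m, ((δ - β) + k) = G := by
    rw [hG_def, show δ + α = (δ - β) + (m:ℝ) by rw [hβ]; ring,
      weylAux_Gamma_add_nat _ hdb0 m, ← hd_def]
  -- final computation
  have hQ : ∏ k ∈ Finset.range m, ((δ - β) + k) = G / d := by
    rw [← P2]; field_simp
  rw [P1, hQ]
  -- solve for u, w, v
  have hu_eq : u = π / (2 * g * Real.sin (π * δ / 2) * Real.cos (π * δ / 2)) := by
    rw [T1] at R3
    rw [eq_div_iff (by positivity)]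
    linear_combination R3
  have hw_eq : w = π / (d * Real.sin (π * (δ - β))) := by
    rw [eq_div_iff (by positivity)]
    linear_combination R1
  have hv_eq : v = π / (a * Real.sin (π * β)) := by
    rw [eq_div_iff (by positivity)]
    linear_combination R2
  have he : ((-1:ℝ)^m) * ((-1:ℝ)^m) = 1 := by
    rw [← pow_add]
    exact Even.neg_one_pow ⟨m, rfl⟩
  rw [hu_eq, hw_eq, hv_eq]
  have step1 : 1 / a *
      (a * (π / (2 * g * Real.sin (π * δ / 2) * Real.cos (π * δ / 2))) /
          (π / (d * Real.sin (π * (δ - β)))) +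
        d * (π / (2 * g * Real.sin (π * δ / 2) * Real.cos (π * δ / 2))) /
          (π / (a * Real.sin (π * β)))) *
      ((-1:ℝ)^m * (G / d))
      = (-1:ℝ)^m * G * (Real.sin (π * (δ - β)) + Real.sin (π * β)) /
          (2 * g * Real.sin (π * δ / 2) * Real.cos (π * δ / 2)) := by
    field_simp
  rw [step1, T2, T3,
    show (-1:ℝ)^m * G * (2 * Real.sin (π * δ / 2) *
        ((-1:ℝ)^m * Real.cos (π * δ / 2 + π * α)))
      = G * (2 * Real.sin (π * δ / 2) * Real.cos (π * δ / 2 + π * α)) *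
          ((-1:ℝ)^m * (-1:ℝ)^m) by ring,
    he, mul_one]
  rw [div_mul_div_comm, div_eq_div_iff (by positivity) (by positivity)]
  ring

/-- Theorem 6: Weyl fractional derivative of order `α` (with `m - 1 < α < m`)
of `|t|^(-δ)` for `m - α < δ < 1` and `t > 0`. -/
theorem weyl_fracDeriv_abs_rpow (m : ℕ) (hm : 0 < m) (α δ t : ℝ)
    (h1 : (m : ℝ) - 1 < α) (h2 : α < m) (hδ1 : (m : ℝ) - α < δ) (hδ2 : δ < 1)
    (ht : 0 < t) :
    iteratedDeriv m
        (fun s : ℝ => (1 / Real.Gamma (m - α)) *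
          ∫ τ in Set.Iic s, (s - τ) ^ ((m : ℝ) - α - 1) * |τ| ^ (-δ)) t =
      (Real.Gamma (δ + α) / Real.Gamma δ) *
        (Real.cos (Real.pi * δ / 2 + Real.pi * α) / Real.cos (Real.pi * δ / 2)) *
        t ^ (-α - δ) := by
  have hβ0 : 0 < (m:ℝ) - α := by linarith
  have hβ1 : (m:ℝ) - α < 1 := by linarith
  have hδ0 : 0 < δ := lt_trans hβ0 hδ1
  have hev : (fun s : ℝ => (1 / Real.Gamma ((m:ℝ) - α)) *
        ∫ τ in Set.Iic s, (s - τ) ^ ((m : ℝ) - α - 1) * |τ| ^ (-δ))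
      =ᶠ[nhds t] fun s => ((1 / Real.Gamma ((m:ℝ) - α)) *
        ∫ u in Ioi (0:ℝ), u ^ (((m:ℝ) - α) - 1) * |1 - u| ^ (-δ)) * s ^ (((m:ℝ) - α) - δ) := by
    refine eventually_of_mem (Ioi_mem_nhds ht) (fun s hs => ?_)
    show (1 / Real.Gamma ((m:ℝ) - α)) *
        ∫ τ in Set.Iic s, (s - τ) ^ ((m : ℝ) - α - 1) * |τ| ^ (-δ) = _
    rw [weylAux_scaling hs]
    ring
  rw [Filter.EventuallyEq.iteratedDeriv_eq m hev,
    weylAux_iteratedDeriv_rpow _ _ m t ht,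
    show ((m:ℝ) - α) - δ - (m:ℕ) = -α - δ by push_cast; ring,
    weylAux_K_eval hβ0 hδ1 hδ2,
    weylAux_const m hβ0 hβ1 hδ1 hδ2]
end

section
/- Let m be a positive natural number and α, λ, t real numbers with m - 1 < α < m and t > 0. Then the Riemann–Liouville fractional derivative of order α (with lower terminal 0) of the exponential function satisfies: the m-th iterated derivative at t of the function s ↦ (1/Γ(m-α)) · ∫₀^s (s - τ)^(m-α-1) · e^(λτ) dτ equals t^(-α) · ∑_{k=0}^∞ (λt)^k / Γ(k + 1 - α), i.e. it equals t^(-α) · E_{1,1-α}(λt). -/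
open Real MeasureTheory intervalIntegral Filter Set
open scoped Nat

/-- A number strictly between 0 and 1 plus an integer is nonzero. -/
lemma beta_add_int_ne {β : ℝ} (h0 : 0 < β) (h1 : β < 1) (a : ℤ) : β + a ≠ 0 := by
  intro h
  have ha : (a : ℝ) = -β := by linarith
  have h2 : (-1 : ℝ) < a := by rw [ha]; linarith
  have h3 : (a : ℝ) < 0 := by rw [ha]; linarith
  have h2' : (-1 : ℤ) < a := by exact_mod_cast h2
  have h3' : a < 0 := by exact_mod_cast h3
  omega

/-- Ratio-test summability for `r^k / |Γ(k+c)|`. -/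
lemma aux_summable (r c : ℝ) :
    Summable fun k : ℕ => r ^ k / |Real.Gamma ((k : ℝ) + c)| := by
  apply summable_of_ratio_norm_eventually_le (r := 1/2) (by norm_num)
  filter_upwards [eventually_ge_atTop (⌈2 * |r| + |c| + 1⌉₊)] with k hk
  have hk' : (2 * |r| + |c| + 1 : ℝ) ≤ k := le_trans (Nat.le_ceil _) (by exact_mod_cast hk)
  have hc1 : 2 * |r| + 1 ≤ (k : ℝ) + c := by
    have := neg_abs_le c; linarith
  have hpos : (0 : ℝ) < (k : ℝ) + c := by have := abs_nonneg r; linarith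
  have hG : 0 < Real.Gamma ((k : ℝ) + c) := Real.Gamma_pos_of_pos hpos
  have hcast : (((k + 1 : ℕ)) : ℝ) + c = ((k : ℝ) + c) + 1 := by push_cast; ring
  rw [hcast, Real.Gamma_add_one hpos.ne']
  rw [Real.norm_eq_abs, Real.norm_eq_abs, abs_div, abs_div, abs_abs, abs_abs,
    abs_mul, abs_of_pos hpos, abs_of_pos hG, abs_pow, abs_pow, pow_succ]
  have key : |r| ^ k * |r| / (((k : ℝ) + c) * Real.Gamma ((k : ℝ) + c))
      = (|r| / ((k : ℝ) + c)) * (|r| ^ k / Real.Gamma ((k : ℝ) + c)) := by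
    rw [div_mul_div_comm, mul_comm]
  rw [key]
  have h5 : |r| / ((k : ℝ) + c) ≤ 1 / 2 := by
    rw [div_le_iff₀ hpos]; linarith
  have h6 : (0:ℝ) ≤ |r| ^ k / Real.Gamma ((k : ℝ) + c) := by positivity
  calc (|r| / ((k : ℝ) + c)) * (|r| ^ k / Real.Gamma ((k : ℝ) + c))
      ≤ (1/2) * (|r| ^ k / Real.Gamma ((k : ℝ) + c)) :=
        mul_le_mul_of_nonneg_right h5 h6
    _ = 1 / 2 * (|r| ^ k / Real.Gamma ((k : ℝ) + c)) := by ring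

/-- The real Beta integral with natural first parameter. -/
lemma real_beta_s10 {β : ℝ} (hβ : 0 < β) (k : ℕ) :
    ∫ x in (0:ℝ)..1, x ^ k * (1 - x) ^ (β - 1) =
      (k ! : ℝ) / ∏ j ∈ Finset.range (k + 1), (β + j) := by
  have hre : 0 < Complex.re (β : ℂ) := by simpa using hβ
  have h := Complex.betaIntegral_eval_nat_add_one_right hre k
  rw [← Complex.betaIntegral_symm] at h
  unfold Complex.betaIntegral at h
  have hcong : ∀ x ∈ uIcc (0:ℝ) 1,
      (x : ℂ) ^ ((k : ℂ) + 1 - 1) * (1 - (x : ℂ)) ^ ((β : ℂ) - 1)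
        = ((x ^ k * (1 - x) ^ (β - 1) : ℝ) : ℂ) := by
    intro x hx
    rw [uIcc_of_le (by norm_num)] at hx
    have hx1 : (0:ℝ) ≤ 1 - x := by linarith [hx.2]
    have e1 : ((k : ℂ) + 1 - 1) = ((k : ℕ) : ℂ) := by ring
    have e2 : ((β : ℂ) - 1) = ((β - 1 : ℝ) : ℂ) := by push_cast; ring
    have e3 : (1 - (x : ℂ)) = (((1 - x : ℝ)) : ℂ) := by push_cast; ring
    rw [e1, Complex.cpow_natCast, e2, e3, ← Complex.ofReal_cpow hx1]
    push_cast
    ring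
  rw [intervalIntegral.integral_congr hcong, intervalIntegral.integral_ofReal] at h
  apply Complex.ofReal_injective
  rw [h]
  push_cast
  ring

/-- `Γ(β + k + 1)` as a product. -/
lemma Gamma_prod {β : ℝ} (hβ : 0 < β) (k : ℕ) :
    Real.Gamma (β + k + 1) = (∏ j ∈ Finset.range (k + 1), (β + j)) * Real.Gamma β := by
  induction k with
  | zero =>
      simp only [Nat.cast_zero, add_zero, Finset.range_one, Finset.prod_singleton]
      rw [Real.Gamma_add_one hβ.ne']
      norm_num
  | succ n ih =>
      have h1 : β + ((n + 1 : ℕ) : ℝ) + 1 = (β + n + 1) + 1 := by push_cast; ring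
      rw [h1, Real.Gamma_add_one (by positivity), ih,
        Finset.prod_range_succ (f := fun j : ℕ => β + (j : ℝ)) (n := n + 1)]
      push_cast
      ring

/-- The key integral: `∫₀^s (s-τ)^(β-1) τ^k dτ`. -/
lemma key_int {β : ℝ} (hβ : 0 < β) {s : ℝ} (hs : 0 < s) (k : ℕ) :
    ∫ τ in (0:ℝ)..s, (s - τ) ^ (β - 1) * τ ^ k =
      s ^ ((k : ℝ) + β) * ((k ! : ℝ) * Real.Gamma β / Real.Gamma (β + k + 1)) := by
  have hc := intervalIntegral.integral_comp_mul_left (a := (0:ℝ)) (b := 1)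
      (f := fun τ => (s - τ) ^ (β - 1) * τ ^ k) (c := s) hs.ne'
  simp only [mul_zero, mul_one, smul_eq_mul] at hc
  have h2 : ∫ τ in (0:ℝ)..s, (s - τ) ^ (β - 1) * τ ^ k
      = s * ∫ x in (0:ℝ)..1, (s - s * x) ^ (β - 1) * (s * x) ^ k := by
    rw [hc]
    field_simp
  rw [h2]
  have h3 : (∫ x in (0:ℝ)..1, (s - s * x) ^ (β - 1) * (s * x) ^ k)
      = ∫ x in (0:ℝ)..1, (s ^ (β - 1) * s ^ k) * (x ^ k * (1 - x) ^ (β - 1)) := by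
    apply intervalIntegral.integral_congr
    intro x hx
    rw [uIcc_of_le (by norm_num)] at hx
    have hx1 : (0:ℝ) ≤ 1 - x := by linarith [hx.2]
    show (s - s * x) ^ (β - 1) * (s * x) ^ k = s ^ (β - 1) * s ^ k * (x ^ k * (1 - x) ^ (β - 1))
    rw [show s - s * x = s * (1 - x) from by ring, Real.mul_rpow hs.le hx1, mul_pow]
    ring
  rw [h3, intervalIntegral.integral_const_mul, real_beta_s10 hβ k, Gamma_prod hβ k]
  have hP : (0:ℝ) < ∏ j ∈ Finset.range (k + 1), (β + j) :=
    Finset.prod_pos fun j _ => by positivity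
  have hG : (0:ℝ) < Real.Gamma β := Real.Gamma_pos_of_pos hβ
  have hspow : s * (s ^ (β - 1) * s ^ k) = s ^ ((k : ℝ) + β) := by
    rw [← Real.rpow_natCast s k, ← Real.rpow_add hs,
      show s * s ^ (β - 1 + (k : ℝ)) = s ^ (1:ℝ) * s ^ (β - 1 + (k : ℝ)) from by
        rw [Real.rpow_one], ← Real.rpow_add hs]
    congr 1
    ring
  have hfrac : (k ! : ℝ) * Real.Gamma β / ((∏ j ∈ Finset.range (k + 1), (β + j)) * Real.Gamma β)
      = (k ! : ℝ) / ∏ j ∈ Finset.range (k + 1), (β + j) := by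
    rw [mul_div_mul_right _ _ hG.ne']
  rw [hfrac, ← hspow]
  ring

/-- The terms of the series after `j` differentiations. -/
noncomputable def gterm (lam β : ℝ) (j k : ℕ) (x : ℝ) : ℝ :=
  lam ^ k / Real.Gamma ((k : ℝ) + β + 1 - j) * x ^ ((k : ℝ) + β - j)

/-- Step 1: the fractional integral of `exp` as a series. -/
lemma lemA {lam β s : ℝ} (hβ : 0 < β) (hs : 0 < s) :
    (1 / Real.Gamma β) * ∫ τ in (0:ℝ)..s, (s - τ) ^ (β - 1) * Real.exp (lam * τ) =
      ∑' k : ℕ, lam ^ k / Real.Gamma ((k : ℝ) + β + 1) * s ^ ((k : ℝ) + β) := by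
  have hG : 0 < Real.Gamma β := Real.Gamma_pos_of_pos hβ
  have hexp : ∀ τ : ℝ, Real.exp (lam * τ) = ∑' k : ℕ, (lam * τ) ^ k / k ! := by
    intro τ
    rw [Real.exp_eq_exp_ℝ, NormedSpace.exp_eq_tsum_div]
  have hI : ∀ k : ℕ, IntervalIntegrable
      (fun τ => (s - τ) ^ (β - 1) * ((lam * τ) ^ k / (k ! : ℝ))) volume 0 s := by
    intro k
    apply IntervalIntegrable.mul_continuousOn
    · have h := (intervalIntegrable_rpow' (a := 0) (b := s)
        (show (-1:ℝ) < β - 1 by linarith)).comp_sub_left s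
      simpa using h.symm
    · fun_prop
  have hnorm : ∀ k : ℕ, (∫ τ in Set.Ioc (0:ℝ) s, ‖(s - τ) ^ (β - 1) * ((lam * τ) ^ k / (k ! : ℝ))‖)
      = |lam| ^ k / k ! * (s ^ ((k : ℝ) + β) * ((k ! : ℝ) * Real.Gamma β / Real.Gamma (β + k + 1))) := by
    intro k
    have hcong : ∀ τ ∈ Set.Ioc (0:ℝ) s, ‖(s - τ) ^ (β - 1) * ((lam * τ) ^ k / (k ! : ℝ))‖
        = |lam| ^ k / k ! * ((s - τ) ^ (β - 1) * τ ^ k) := by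
      intro τ hτ
      have h1 : (0:ℝ) ≤ s - τ := by linarith [hτ.2]
      have h2 : 0 < τ := hτ.1
      rw [norm_mul, norm_div, norm_pow, Real.norm_eq_abs, Real.norm_eq_abs, Real.norm_eq_abs,
        abs_of_nonneg (Real.rpow_nonneg h1 _), abs_mul, abs_of_pos h2, Nat.abs_cast, mul_pow]
      ring
    rw [MeasureTheory.setIntegral_congr_fun measurableSet_Ioc hcong,
      ← intervalIntegral.integral_of_le hs.le, intervalIntegral.integral_const_mul,
      key_int hβ hs k]
  have hsum : Summable fun k : ℕ =>
      ∫ τ in Set.Ioc (0:ℝ) s, ‖(s - τ) ^ (β - 1) * ((lam * τ) ^ k / (k ! : ℝ))‖ := by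
    simp only [hnorm]
    apply Summable.of_norm_bounded
      ((aux_summable (|lam| * s) (β + 1)).mul_right (s ^ β * Real.Gamma β))
    intro k
    have hGk : 0 < Real.Gamma (β + k + 1) := Real.Gamma_pos_of_pos (by positivity)
    have hfact : (0:ℝ) < k ! := by positivity
    rw [Real.norm_eq_abs, abs_of_nonneg (by positivity),
      show (k : ℝ) + (β + 1) = β + k + 1 from by ring, abs_of_pos hGk,
      Real.rpow_add hs, Real.rpow_natCast, mul_pow]
    apply le_of_eq
    field_simp
  have hval : ∀ k : ℕ, (∫ τ in Set.Ioc (0:ℝ) s, (s - τ) ^ (β - 1) * ((lam * τ) ^ k / (k ! : ℝ)))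
      = lam ^ k / k ! * (s ^ ((k : ℝ) + β) * ((k ! : ℝ) * Real.Gamma β / Real.Gamma (β + k + 1))) := by
    intro k
    rw [← intervalIntegral.integral_of_le hs.le]
    have e : (fun τ => (s - τ) ^ (β - 1) * ((lam * τ) ^ k / (k ! : ℝ)))
        = fun τ => lam ^ k / k ! * ((s - τ) ^ (β - 1) * τ ^ k) := by
      funext τ
      rw [mul_pow]
      ring
    rw [e, intervalIntegral.integral_const_mul, key_int hβ hs k]
  have step1 : (∫ τ in (0:ℝ)..s, (s - τ) ^ (β - 1) * Real.exp (lam * τ))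
      = ∑' k : ℕ, ∫ τ in Set.Ioc (0:ℝ) s, (s - τ) ^ (β - 1) * ((lam * τ) ^ k / (k ! : ℝ)) := by
    rw [intervalIntegral.integral_of_le hs.le]
    have hptw : ∀ τ : ℝ, (s - τ) ^ (β - 1) * Real.exp (lam * τ)
        = ∑' k : ℕ, (s - τ) ^ (β - 1) * ((lam * τ) ^ k / (k ! : ℝ)) := by
      intro τ
      rw [hexp τ, tsum_mul_left]
    simp only [hptw]
    exact (MeasureTheory.integral_tsum_of_summable_integral_norm (fun k => (hI k).1) hsum).symm
  rw [step1]
  simp only [hval]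
  rw [← tsum_mul_left]
  apply tsum_congr
  intro k
  have hGk : Real.Gamma (β + k + 1) ≠ 0 := (Real.Gamma_pos_of_pos (by positivity)).ne'
  have hf : (k ! : ℝ) ≠ 0 := by positivity
  rw [show (k : ℝ) + β + 1 = β + k + 1 from by ring]
  field_simp

/-- Step 2: termwise differentiation. -/
lemma lemB {lam β : ℝ} (h0 : 0 < β) (h1 : β < 1) (j : ℕ) {s : ℝ} (hs : 0 < s) :
    HasDerivAt (fun x => ∑' k : ℕ, gterm lam β j k x) (∑' k : ℕ, gterm lam β (j + 1) k s) s := by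
  have hne : ∀ a : ℤ, β + a ≠ 0 := beta_add_int_ne h0 h1
  have hnej : ∀ k : ℕ, (k : ℝ) + β - j ≠ 0 := by
    intro k
    have h := hne ((k : ℤ) - j)
    push_cast at h
    intro hh
    apply h
    linarith
  have hGne : ∀ k : ℕ, Real.Gamma ((k : ℝ) + β - j) ≠ 0 := by
    intro k
    apply Real.Gamma_ne_zero
    intro n
    have h := hne ((k : ℤ) - j + n)
    push_cast at h
    intro hh
    apply h
    linarith
  have hsS : s ∈ Set.Ioo (s / 2) (2 * s) := ⟨by linarith, by linarith⟩
  have hderiv : ∀ (k : ℕ), ∀ x ∈ Set.Ioo (s / 2) (2 * s),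
      HasDerivAt (gterm lam β j k) (gterm lam β (j + 1) k x) x := by
    intro k x hx
    have hx0 : 0 < x := lt_trans (by linarith) hx.1
    have h := (Real.hasDerivAt_rpow_const (x := x) (p := (k : ℝ) + β - j)
      (Or.inl hx0.ne')).const_mul (lam ^ k / Real.Gamma ((k : ℝ) + β + 1 - j))
    have hval : lam ^ k / Real.Gamma ((k : ℝ) + β + 1 - j) * (((k : ℝ) + β - j) * x ^ ((k : ℝ) + β - j - 1))
        = gterm lam β (j + 1) k x := by
      unfold gterm
      rw [show (k : ℝ) + β + 1 - (j : ℝ) = ((k : ℝ) + β - j) + 1 from by ring,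
        Real.Gamma_add_one (hnej k),
        show (k : ℝ) + β + 1 - ((j + 1 : ℕ) : ℝ) = (k : ℝ) + β - j from by push_cast; ring,
        show (k : ℝ) + β - ((j + 1 : ℕ) : ℝ) = (k : ℝ) + β - j - 1 from by push_cast; ring]
      field_simp
      rw [div_eq_div_iff (mul_ne_zero (hnej k) (hGne k)) (hGne k)]
      ring
    rw [hval] at h
    exact h
  have hbound : ∀ (k : ℕ), ∀ x ∈ Set.Ioo (s / 2) (2 * s),
      ‖gterm lam β (j + 1) k x‖
        ≤ (|lam| * (2 * s)) ^ k / |Real.Gamma ((k : ℝ) + (β - j))| * (s / 2) ^ (β - (j : ℝ) - 1) := by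
    intro k x hx
    have hx0 : 0 < x := lt_trans (by linarith) hx.1
    unfold gterm
    rw [Real.norm_eq_abs, abs_mul, abs_div, abs_pow,
      show (k : ℝ) + β + 1 - ((j + 1 : ℕ) : ℝ) = (k : ℝ) + (β - j) from by push_cast; ring,
      show (k : ℝ) + β - ((j + 1 : ℕ) : ℝ) = (k : ℝ) + (β - (j : ℝ) - 1) from by push_cast; ring,
      abs_of_nonneg (Real.rpow_nonneg hx0.le _), Real.rpow_add hx0, Real.rpow_natCast]
    have hb1 : x ^ k ≤ (2 * s) ^ k := pow_le_pow_left₀ hx0.le hx.2.le k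
    have hb2 : x ^ (β - (j : ℝ) - 1) ≤ (s / 2) ^ (β - (j : ℝ) - 1) := by
      apply Real.rpow_le_rpow_of_nonpos (by linarith) hx.1.le
      have hj : (0:ℝ) ≤ (j : ℝ) := Nat.cast_nonneg j
      linarith
    calc |lam| ^ k / |Real.Gamma ((k : ℝ) + (β - j))| * (x ^ k * x ^ (β - (j : ℝ) - 1))
        ≤ |lam| ^ k / |Real.Gamma ((k : ℝ) + (β - j))| * ((2 * s) ^ k * (s / 2) ^ (β - (j : ℝ) - 1)) := by
          apply mul_le_mul_of_nonneg_left _ (by positivity)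
          exact mul_le_mul hb1 hb2 (Real.rpow_nonneg hx0.le _) (by positivity)
      _ = (|lam| * (2 * s)) ^ k / |Real.Gamma ((k : ℝ) + (β - j))| * (s / 2) ^ (β - (j : ℝ) - 1) := by
          rw [mul_pow]
          ring
  have hu : Summable fun k : ℕ =>
      (|lam| * (2 * s)) ^ k / |Real.Gamma ((k : ℝ) + (β - j))| * (s / 2) ^ (β - (j : ℝ) - 1) :=
    (aux_summable _ _).mul_right _
  have hg0 : Summable fun k : ℕ => gterm lam β j k s := by
    apply Summable.of_norm_bounded
      ((aux_summable (|lam| * s) (β + 1 - j)).mul_right (s ^ (β - (j : ℝ))))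
    intro k
    unfold gterm
    rw [Real.norm_eq_abs, abs_mul, abs_div, abs_pow,
      abs_of_nonneg (Real.rpow_nonneg hs.le _),
      show (k : ℝ) + β + 1 - (j : ℝ) = (k : ℝ) + (β + 1 - j) from by ring,
      show (k : ℝ) + β - (j : ℝ) = (k : ℝ) + (β - (j : ℝ)) from by ring,
      Real.rpow_add hs, Real.rpow_natCast, mul_pow]
    apply le_of_eq
    ring
  exact hasDerivAt_tsum_of_isPreconnected hu isOpen_Ioo isPreconnected_Ioo hderiv hbound hsS hg0 hsS

/-- Step 3: iterated derivatives of the series. -/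
lemma lemC {lam β : ℝ} (h0 : 0 < β) (h1 : β < 1) (j : ℕ) :
    ∀ s : ℝ, 0 < s →
      iteratedDeriv j (fun x => ∑' k : ℕ, gterm lam β 0 k x) s = ∑' k : ℕ, gterm lam β j k s := by
  induction j with
  | zero => intro s _; simp [iteratedDeriv_zero]
  | succ n ih =>
      intro s hs
      rw [iteratedDeriv_succ]
      have hev : iteratedDeriv n (fun x => ∑' k : ℕ, gterm lam β 0 k x)
          =ᶠ[nhds s] fun x => ∑' k : ℕ, gterm lam β n k x := by
        filter_upwards [isOpen_Ioi.mem_nhds hs] with x hx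
        exact ih x hx
      rw [hev.deriv_eq]
      exact (lemB h0 h1 n hs).deriv

/-- Theorem 7: Riemann–Liouville fractional derivative of order `α`
(with `m - 1 < α < m`, lower terminal 0) of the exponential:
`₀D_t^α e^(λt) = t^(-α) E_{1,1-α}(λt)`. -/
theorem rl_fracDeriv_exp (m : ℕ) (hm : 0 < m) (α lam t : ℝ)
    (h1 : (m : ℝ) - 1 < α) (h2 : α < m) (ht : 0 < t) :
    iteratedDeriv m
        (fun s : ℝ => (1 / Real.Gamma (m - α)) *
          ∫ τ in (0:ℝ)..s, (s - τ) ^ ((m : ℝ) - α - 1) * Real.exp (lam * τ)) t =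
      t ^ (-α) * ∑' k : ℕ, (lam * t) ^ k / Real.Gamma (k + 1 - α) := by
  set β : ℝ := (m : ℝ) - α with hβdef
  have hβ0 : 0 < β := by rw [hβdef]; linarith
  have hβ1 : β < 1 := by rw [hβdef]; linarith
  have hev : (fun s : ℝ => (1 / Real.Gamma (m - α)) *
        ∫ τ in (0:ℝ)..s, (s - τ) ^ ((m : ℝ) - α - 1) * Real.exp (lam * τ))
      =ᶠ[nhds t] fun x => ∑' k : ℕ, gterm lam β 0 k x := by
    filter_upwards [isOpen_Ioi.mem_nhds ht] with x hx
    have hA := lemA (lam := lam) hβ0 (hx : 0 < x)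
    rw [show (m : ℝ) - α - 1 = β - 1 from by rw [hβdef], show ((m : ℝ) - α) = β from hβdef.symm, hA]
    apply tsum_congr
    intro k
    simp [gterm]
  rw [hev.iteratedDeriv_eq m, lemC hβ0 hβ1 m t ht, ← tsum_mul_left]
  apply tsum_congr
  intro k
  unfold gterm
  rw [hβdef,
    show (k : ℝ) + ((m : ℝ) - α) + 1 - (m : ℝ) = (k : ℝ) + 1 - α from by ring,
    show (k : ℝ) + ((m : ℝ) - α) - (m : ℝ) = (k : ℝ) + (-α) from by ring,
    Real.rpow_add ht, Real.rpow_natCast, mul_pow]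
  ring
end

section
/- Let n be a natural number, β a real number such that β - n + 1 is not a nonpositive integer (i.e. β - n + 1 ≠ -k for every natural number k), and t > 0 a real number. Then the n-th iterated derivative at t of the function x ↦ x^β · log x equals (Γ(β+1)/Γ(β-n+1)) · t^(β-n) · (log t + ψ(β+1) - ψ(β-n+1)), where ψ denotes the digamma function. -/
lemma deriv_Gamma_add_one {x : ℝ} (hx : ∀ m : ℕ, x ≠ -m) :
    deriv Real.Gamma (x + 1) = Real.Gamma x + x * deriv Real.Gamma x := by
  have hx0 : x ≠ 0 := by simpa using hx 0
  have hdiff : DifferentiableAt ℝ Real.Gamma x := Real.differentiableAt_Gamma hx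
  have h1 : HasDerivAt (fun y : ℝ => Real.Gamma (y + 1))
      (deriv Real.Gamma (x + 1)) x := by
    have hd1 : DifferentiableAt ℝ Real.Gamma (x + 1) := by
      apply Real.differentiableAt_Gamma
      intro m
      intro h
      exact hx (m + 1) (by push_cast; linarith)
    have := hd1.hasDerivAt.comp x ((hasDerivAt_id x).add_const 1)
    exact this.congr_deriv (by simp)
  have h2 : HasDerivAt (fun y : ℝ => y * Real.Gamma y)
      (Real.Gamma x + x * deriv Real.Gamma x) x := by
    have := (hasDerivAt_id x).mul hdiff.hasDerivAt
    exact this.congr_deriv (by simp)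
  have heq : (fun y : ℝ => Real.Gamma (y + 1)) =ᶠ[nhds x] fun y => y * Real.Gamma y := by
    filter_upwards [isOpen_compl_singleton.mem_nhds (by simpa using hx0 : x ∈ ({0}ᶜ : Set ℝ))]
      with y hy
    exact Real.Gamma_add_one hy
  have := h1.congr_of_eventuallyEq heq.symm
  exact this.unique h2 ▸ rfl

lemma digamma_add_one {x : ℝ} (hx : ∀ m : ℕ, x ≠ -m) :
    digamma (x + 1) = digamma x + 1 / x := by
  have hx0 : x ≠ 0 := by simpa using hx 0
  have hG : Real.Gamma x ≠ 0 := Real.Gamma_ne_zero hx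
  unfold digamma
  rw [deriv_Gamma_add_one hx, Real.Gamma_add_one hx0]
  field_simp
  ring

/-- Lemma 5: the `n`-th derivative of `x ↦ x^β log x` at `t > 0` equals
`(Γ(β+1)/Γ(β-n+1)) t^(β-n) (log t + ψ(β+1) - ψ(β-n+1))`,
provided `β - n + 1` is not a nonpositive integer. -/
theorem iteratedDeriv_rpow_log (n : ℕ) (β t : ℝ)
    (hβ : ∀ k : ℕ, β - n + 1 ≠ -k) (ht : 0 < t) :
    iteratedDeriv n (fun x : ℝ => x ^ β * Real.log x) t =
      (Real.Gamma (β + 1) / Real.Gamma (β - n + 1)) * t ^ (β - n) *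
        (Real.log t + digamma (β + 1) - digamma (β - n + 1)) := by
  induction n generalizing t with
  | zero =>
    have hG : Real.Gamma (β + 1) ≠ 0 := Real.Gamma_ne_zero (by simpa using hβ)
    simp only [iteratedDeriv_zero, Nat.cast_zero, sub_zero]
    rw [div_self hG]
    ring
  | succ n ih =>
    have hβn : ∀ k : ℕ, β - n + 1 ≠ -k := by
      intro k h
      exact hβ (k + 1) (by push_cast at h ⊢; linarith)
    have hne : β - n ≠ 0 := by
      have := hβ 0
      push_cast at this
      intro h; apply this; linarith
    have hmem : ∀ m : ℕ, β - n ≠ -m := by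
      intro m h
      exact hβ m (by push_cast at h ⊢; linarith)
    set C := Real.Gamma (β + 1) / Real.Gamma (β - n + 1) with hC
    set D := digamma (β + 1) - digamma (β - n + 1) with hD
    have hcast : (β - (n + 1 : ℕ) + 1 : ℝ) = β - n := by push_cast; ring
    have key : deriv (iteratedDeriv n (fun x : ℝ => x ^ β * Real.log x)) t =
        deriv (fun x : ℝ => C * x ^ (β - n) * (Real.log x + D)) t := by
      apply Filter.EventuallyEq.deriv_eq
      filter_upwards [isOpen_Ioi.mem_nhds ht] with y hy
      rw [ih y hβn hy]
      ring
    have hder : HasDerivAt (fun x : ℝ => C * x ^ (β - n) * (Real.log x + D))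
        (C * ((β - n) * t ^ (β - n - 1)) * (Real.log t + D)
          + C * t ^ (β - n) * (1 / t)) t := by
      have h1 : HasDerivAt (fun x : ℝ => C * x ^ (β - n))
          (C * ((β - n) * t ^ (β - n - 1))) t :=
        (Real.hasDerivAt_rpow_const (Or.inl ht.ne')).const_mul C
      have h2 : HasDerivAt (fun x : ℝ => Real.log x + D) (1 / t) t := by
        simpa [one_div] using (Real.hasDerivAt_log ht.ne').add_const D
      exact h1.mul h2
    rw [iteratedDeriv_succ, key, hder.deriv]
    rw [hcast]
    have hGrec : Real.Gamma (β - n + 1) = (β - n) * Real.Gamma (β - n) :=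
      Real.Gamma_add_one hne
    have hdig : digamma (β - n + 1) = digamma (β - n) + 1 / (β - n) :=
      digamma_add_one hmem
    have htpow : t ^ (β - n) * (1 / t) = t ^ (β - n - 1) := by
      rw [Real.rpow_sub ht (β - n) 1, Real.rpow_one]
      ring
    have hG0 : Real.Gamma (β - n) ≠ 0 := Real.Gamma_ne_zero hmem
    have h2 : C * t ^ (β - n) * (1 / t) = C * t ^ (β - n - 1) := by
      rw [mul_assoc, htpow]
    have hc2 : (β - ((n + 1 : ℕ) : ℝ)) = β - n - 1 := by push_cast; ring
    rw [h2, hC, hD, hGrec, hdig, hc2]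
    generalize t ^ (β - n - 1) = A
    field_simp
    ring
end
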